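/- arXiv:cs/0107033 — 7 statements merged into one kernel-verified Lean document; each statement's English description precedes it below -/
import Mathlib

section
/- Let n ≥ 1 and let p_1, …, p_n ∈ [0,1). Define T(p) = ∑_{k=1}^∞ (1 − ∏_{i=1}^n (1 − p_i^k)). Then max_{1≤i≤n} 1/(1 − p_i) ≤ 1 + T(p) ≤ ∑_{i=1}^n 1/(1 − p_i). -/
/-- Weierstrass product inequality: `1 - ∑ f ≤ ∏ (1 - f)` for `f` with values in `[0,1]`. -/
lemma one_sub_sum_le_prod_one_sub' {ι : Type*} (s : Finset ι) (f : ι → ℝ)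
    (h0 : ∀ i ∈ s, 0 ≤ f i) (h1 : ∀ i ∈ s, f i ≤ 1) :
    1 - ∑ i ∈ s, f i ≤ ∏ i ∈ s, (1 - f i) := by
  classical
  induction s using Finset.induction with
  | empty => simp
  | @insert a s hx ih =>
    rw [Finset.sum_insert hx, Finset.prod_insert hx]
    have ha0 := h0 a (Finset.mem_insert_self a s)
    have ha1 := h1 a (Finset.mem_insert_self a s)
    have ih' := ih (fun i hi => h0 i (Finset.mem_insert_of_mem hi))
      (fun i hi => h1 i (Finset.mem_insert_of_mem hi))
    have hsum : 0 ≤ ∑ i ∈ s, f i :=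
      Finset.sum_nonneg fun i hi => h0 i (Finset.mem_insert_of_mem hi)
    nlinarith [mul_nonneg ha0 hsum]

/-- Bounds on the expected convergence time of the batch learning algorithm:
for `p₁, …, pₙ ∈ [0,1)` and `T = ∑_{k≥1} (1 - ∏_i (1 - p_i^k))`,
`max_i 1/(1-p_i) ≤ 1 + T ≤ ∑_i 1/(1-p_i)`. -/
theorem stmt_1 (n : ℕ) (hn : 1 ≤ n) (p : Fin n → ℝ)
    (hp : ∀ i, p i ∈ Set.Ico (0 : ℝ) 1)
    (T : ℝ) (hT : T = ∑' k : ℕ, (1 - ∏ i, (1 - p i ^ (k + 1)))) :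
    (∀ i, 1 / (1 - p i) ≤ 1 + T) ∧ 1 + T ≤ ∑ i, 1 / (1 - p i) := by
  have hp0 : ∀ i, 0 ≤ p i := fun i => (hp i).1
  have hp1 : ∀ i, p i < 1 := fun i => (hp i).2
  have hpk0 : ∀ (i) (k : ℕ), 0 ≤ p i ^ k := fun i k => pow_nonneg (hp0 i) k
  have hpk1 : ∀ (i) (k : ℕ), p i ^ k ≤ 1 := fun i k => pow_le_one₀ (hp0 i) (hp1 i).le
  set f : ℕ → ℝ := fun k => 1 - ∏ i, (1 - p i ^ (k + 1)) with hf
  set g : ℕ → ℝ := fun k => ∑ i, p i ^ (k + 1) with hg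
  have hfg : ∀ k, f k ≤ g k := by
    intro k
    have := one_sub_sum_le_prod_one_sub' Finset.univ (fun i => p i ^ (k + 1))
      (fun i _ => hpk0 i _) (fun i _ => hpk1 i _)
    simp only [f, g]
    linarith
  have hf0 : ∀ k, 0 ≤ f k := by
    intro k
    have : ∏ i, (1 - p i ^ (k + 1)) ≤ 1 :=
      Finset.prod_le_one (fun i _ => by linarith [hpk1 i (k + 1)])
        (fun i _ => by linarith [hpk0 i (k + 1)])
    simp only [f]; linarith
  have hsumgi : ∀ i, Summable (fun k : ℕ => p i ^ (k + 1)) := fun i =>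
    (summable_geometric_of_lt_one (hp0 i) (hp1 i)).comp_injective (add_left_injective 1)
  have hsumg : Summable g := summable_sum fun i _ => hsumgi i
  have hsumf : Summable f := Summable.of_nonneg_of_le hf0 hfg hsumg
  have htgeom : ∀ i, ∑' k : ℕ, p i ^ (k + 1) = 1 / (1 - p i) - 1 := by
    intro i
    have h := tsum_geometric_of_lt_one (hp0 i) (hp1 i)
    have h2 := Summable.tsum_eq_zero_add (summable_geometric_of_lt_one (hp0 i) (hp1 i))
    rw [h] at h2
    simp only [pow_zero] at h2
    rw [one_div]
    linarith
  constructor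
  · intro i
    have hle : ∀ k, p i ^ (k + 1) ≤ f k := by
      intro k
      have : ∏ j, (1 - p j ^ (k + 1)) ≤ 1 - p i ^ (k + 1) := by
        rw [← Finset.mul_prod_erase Finset.univ _ (Finset.mem_univ i)]
        have hprod1 : ∏ j ∈ Finset.univ.erase i, (1 - p j ^ (k+1)) ≤ 1 :=
          Finset.prod_le_one (fun j _ => by linarith [hpk1 j (k+1)])
            (fun j _ => by linarith [hpk0 j (k+1)])
        have hprod0 : 0 ≤ ∏ j ∈ Finset.univ.erase i, (1 - p j ^ (k+1)) :=
          Finset.prod_nonneg (fun j _ => by linarith [hpk1 j (k+1)])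
        nlinarith [hpk0 i (k+1), hpk1 i (k+1)]
      simp only [f]; linarith
    have := Summable.tsum_le_tsum hle (hsumgi i) hsumf
    rw [htgeom i] at this
    rw [hT]
    linarith
  · have h1 : T ≤ ∑' k, g k := hT ▸ Summable.tsum_le_tsum hfg hsumf hsumg
    have h2 : ∑' k, g k = ∑ i, (1 / (1 - p i) - 1) := by
      rw [hg, Summable.tsum_finsetSum fun i _ => hsumgi i]
      exact Finset.sum_congr rfl fun i _ => htgeom i
    rw [h2, Finset.sum_sub_distrib] at h1
    simp only [Finset.sum_const, Finset.card_univ, Fintype.card_fin, nsmul_eq_mul, mul_one] at h1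
    have : (1 : ℝ) ≤ n := by exact_mod_cast hn
    linarith
end

section
/- Let δ > 0 and let p_1, …, p_n be i.i.d. random variables with values in [0,1] whose common law has a density f with respect to Lebesgue measure satisfying f(1−x) = 1 + O(x^{δ}) as x → 0+. Set S_n = ∑_{i=1}^n 1/(1 − p_i). Then for every ε > 0, P(|S_n/(n log n) − 1| > ε) → 0 as n → ∞. -/
/-!
Write `X_i = 1 / (1 - p_i)`. Since the density of `p_i` is close to `1` just below `1`, the tail
`P(X > t) = P(p > 1 - 1/t)` is asymptotic to `1/t`, so by the layer-cake formula the truncated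
mean `E[min X K] = ∫₀ᴷ P(X > t) dt` is asymptotic to `log K`. Truncate at `K_n = n √(log n)`:
some `X_i` with `i < n` exceeds `K_n` with probability at most `n P(X > K_n) ≈ 1/√(log n)`, and
the truncated sum has mean `n E[min X K_n] ~ n log n` and variance at most
`n K_n E[min X K_n] ≈ n² (log n)^{3/2}`, so by Chebyshev it deviates from its mean by
`ε n log n` with probability `O(1/√(log n))`.
-/

open MeasureTheory ProbabilityTheory Filter Asymptotics Set Topology

lemma abs_measureReal_withDensity_sub_le {α : Type*} [MeasurableSpace α] {μ : Measure α}
    {f : α → ℝ} {s : Set α} (hs : MeasurableSet s) (hμs : μ s ≠ ⊤) {η : ℝ} (hη : 0 ≤ η)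
    (hf : ∀ x ∈ s, |f x - 1| ≤ η) :
    |(μ.withDensity fun x => ENNReal.ofReal (f x)).real s - μ.real s| ≤ η * μ.real s := by
  set ν := μ.withDensity fun x => ENNReal.ofReal (f x)
  have hf' : ∀ᵐ x ∂μ.restrict s, |f x - 1| ≤ η := (ae_restrict_iff' hs).2 (ae_of_all _ hf)
  have hlower : ENNReal.ofReal (1 - η) * μ s ≤ ν s := by
    rw [withDensity_apply _ hs, ← setLIntegral_const]
    exact lintegral_mono_ae <| hf'.mono fun x hx =>
      ENNReal.ofReal_le_ofReal (by linarith [(abs_le.1 hx).1])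
  have hupper : ν s ≤ ENNReal.ofReal (1 + η) * μ s := by
    rw [withDensity_apply _ hs, ← setLIntegral_const]
    exact lintegral_mono_ae <| hf'.mono fun x hx =>
      ENNReal.ofReal_le_ofReal (by linarith [(abs_le.1 hx).2])
  have hupper' : ν.real s ≤ (1 + η) * μ.real s := by
    simpa [measureReal_def, ENNReal.toReal_mul, ENNReal.toReal_ofReal (by linarith : 0 ≤ 1 + η)]
      using ENNReal.toReal_mono (by finiteness) hupper
  have hlower' : (1 - η) * μ.real s ≤ ν.real s :=
    calc (1 - η) * μ.real s ≤ max (1 - η) 0 * μ.real s := by gcongr; exact le_max_left _ _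
      _ = (ENNReal.ofReal (1 - η) * μ s).toReal := by
          rw [ENNReal.toReal_mul, ENNReal.toReal_ofReal', measureReal_def]
      _ ≤ ν.real s := ENNReal.toReal_mono (ne_top_of_le_ne_top (by finiteness) hupper) hlower
  rw [abs_sub_le_iff]
  constructor <;> linarith

lemma tendsto_of_isBigO_rpow_nhdsGT_zero {g : ℝ → ℝ} {δ : ℝ} (hδ : 0 < δ)
    (h : (fun x => g x - 1) =O[𝓝[>] 0] fun x => x ^ δ) : Tendsto g (𝓝[>] 0) (𝓝 1) := by
  have hpow : Tendsto (fun x : ℝ => x ^ δ) (𝓝[>] 0) (𝓝 0) := by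
    simpa [Real.zero_rpow hδ.ne'] using
      (Real.continuousAt_rpow_const 0 δ (Or.inr hδ.le)).tendsto.mono_left nhdsWithin_le_nhds
  simpa using (h.trans_tendsto hpow).add_const 1

theorem isEquivalent_measureReal_withDensity_Ioo {f : ℝ → ℝ} {b : ℝ}
    (hf : Tendsto (fun u => f (b - u)) (𝓝[>] 0) (𝓝 1)) :
    (fun t => (volume.withDensity fun x => ENNReal.ofReal (f x)).real (Ioo (b - t⁻¹) b))
      ~[atTop] fun t => t⁻¹ := by
  refine isLittleO_iff.2 fun η hη => ?_
  obtain ⟨r, hr, hfr⟩ := Metric.tendsto_nhdsWithin_nhds.1 hf η hη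
  filter_upwards [eventually_gt_atTop r⁻¹] with t ht
  have ht0 : 0 < t := (inv_pos.2 hr).trans ht
  have hvol : volume.real (Ioo (b - t⁻¹) b) = t⁻¹ := by
    simp [ht0.le]
  have hclose : ∀ x ∈ Ioo (b - t⁻¹) b, |f x - 1| ≤ η := fun x hx => by
    have hu : dist (b - x) 0 < r := by
      rw [Real.dist_0_eq_abs, abs_of_pos (sub_pos.2 hx.2)]
      exact (sub_lt_comm.1 hx.1).trans ((inv_lt_comm₀ hr ht0).1 ht)
    simpa [Real.dist_eq] using (hfr (sub_pos.2 hx.2) hu).le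
  simpa [hvol, abs_of_pos ht0] using abs_measureReal_withDensity_sub_le (μ := volume)
    measurableSet_Ioo measure_Ioo_lt_top.ne hη.le hclose

lemma setOf_lt_one_div_sub {b t : ℝ} (ht : 0 < t) :
    {x : ℝ | t < 1 / (b - x)} = Ioo (b - t⁻¹) b := by
  ext x
  simp only [mem_ofPred_eq, mem_Ioo]
  constructor
  · intro h
    have hbx : 0 < b - x := one_div_pos.1 (ht.trans h)
    rw [lt_one_div ht hbx, one_div] at h
    constructor <;> linarith
  · rintro ⟨hlo, hhi⟩
    rw [lt_one_div ht (sub_pos.2 hhi), one_div]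
    linarith

lemma abs_intervalIntegral_sub_log_div_le {g : ℝ → ℝ} {T b η : ℝ} (hT : 0 < T) (hTb : T ≤ b)
    (hg : IntervalIntegrable g volume T b) (h : ∀ t ∈ Icc T b, |g t - t⁻¹| ≤ η * t⁻¹) :
    |(∫ t in T..b, g t) - Real.log (b / T)| ≤ η * Real.log (b / T) := by
  have hinv : IntervalIntegrable (fun t => t⁻¹) volume T b :=
    intervalIntegral.intervalIntegrable_inv (fun t ht => by
      rw [uIcc_of_le hTb] at ht; exact (hT.trans_le ht.1).ne') continuousOn_id
  rw [← integral_inv_of_pos hT (hT.trans_le hTb), ← intervalIntegral.integral_sub hg hinv,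
    ← Real.norm_eq_abs]
  calc ‖∫ t in T..b, g t - t⁻¹‖ ≤ ∫ t in T..b, η * t⁻¹ :=
        intervalIntegral.norm_integral_le_of_norm_le hTb
          (ae_of_all _ fun t ht => h t (Ioc_subset_Icc_self ht)) (hinv.const_mul η)
    _ = η * ∫ t in T..b, t⁻¹ := intervalIntegral.integral_const_mul _ _

theorem isEquivalent_intervalIntegral_log {g : ℝ → ℝ} {a : ℝ}
    (hg : ∀ b, IntervalIntegrable g volume a b) (h : g ~[atTop] fun t => t⁻¹) :
    (fun b => ∫ t in a..b, g t) ~[atTop] Real.log := by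
  refine isLittleO_iff.2 fun c hc => ?_
  obtain ⟨T, hT⟩ := eventually_atTop.1
    ((isLittleO_iff.1 h (half_pos hc)).and (eventually_ge_atTop 1))
  have hT1 : 1 ≤ T := (hT T le_rfl).2
  set D := |(∫ t in a..T, g t) - Real.log T|
  filter_upwards [eventually_ge_atTop T,
    Real.tendsto_log_atTop.eventually_ge_atTop (2 * D / c)] with b hTb hDb
  have hgTb : IntervalIntegrable g volume T b := (hg T).symm.trans (hg b)
  have hT0 : 0 < T := zero_lt_one.trans_le hT1
  have htail := abs_intervalIntegral_sub_log_div_le hT0 hTb hgTb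
    fun t ht => by
      simpa [abs_of_pos (zero_lt_one.trans_le (hT1.trans ht.1))] using (hT t ht.1).1
  rw [Real.log_div (hT0.trans_le hTb).ne' hT0.ne'] at htail
  have hlogT : 0 ≤ Real.log T := Real.log_nonneg hT1
  have hD : D ≤ c / 2 * Real.log b := by
    rw [div_le_iff₀ hc] at hDb; linarith
  rw [Pi.sub_apply, ← intervalIntegral.integral_add_adjacent_intervals (hg T) hgTb,
    Real.norm_eq_abs, Real.norm_eq_abs, abs_of_nonneg (hlogT.trans (Real.log_le_log hT0 hTb))]
  calc |(∫ t in a..T, g t) + (∫ t in T..b, g t) - Real.log b|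
      ≤ D + |(∫ t in T..b, g t) - (Real.log b - Real.log T)| := by
        rw [show (∫ t in a..T, g t) + (∫ t in T..b, g t) - Real.log b
          = ((∫ t in a..T, g t) - Real.log T) + ((∫ t in T..b, g t) - (Real.log b - Real.log T))
          by ring]
        exact abs_add_le _ _
    _ ≤ c * Real.log b := by nlinarith

lemma isEquivalent_log_mul_sqrt_log :
    (fun x => Real.log (x * √(Real.log x))) ~[atTop] Real.log := by
  have hsmall : (fun x => Real.log (√(Real.log x))) =o[atTop] Real.log := by
    refine ((Real.isLittleO_log_id_atTop.comp_tendsto Real.tendsto_log_atTop).const_mul_left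
      (1 / 2)).congr' ?_ EventuallyEq.rfl
    filter_upwards [eventually_ge_atTop 1] with x hx
    simp [Real.log_sqrt (Real.log_nonneg hx), div_eq_inv_mul]
  refine (IsEquivalent.refl.add_isLittleO hsmall).congr_left ?_
  filter_upwards [eventually_gt_atTop 1] with x hx
  have hlog : 0 < Real.log x := Real.log_pos hx
  exact (Real.log_mul (by positivity) (by positivity)).symm

lemma tendsto_mul_sqrt_log_atTop : Tendsto (fun x => x * √(Real.log x)) atTop atTop :=
  tendsto_id.atTop_mul_atTop₀ (Real.tendsto_sqrt_atTop.comp Real.tendsto_log_atTop)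

lemma tendsto_mul_comp_mul_sqrt_log {g : ℝ → ℝ} (hg : g ~[atTop] fun t => t⁻¹) :
    Tendsto (fun x => x * g (x * √(Real.log x))) atTop (𝓝 0) := by
  refine (IsEquivalent.refl.mul (hg.comp_tendsto tendsto_mul_sqrt_log_atTop)).symm.tendsto_nhds
    ((tendsto_inv_atTop_zero.comp (Real.tendsto_sqrt_atTop.comp Real.tendsto_log_atTop)).congr' ?_)
  filter_upwards [eventually_gt_atTop 0] with x hx
  simp only [Function.comp_apply, Pi.mul_apply]
  field_simp

lemma tendsto_mul_sqrt_log_mul_div_sq {M : ℝ → ℝ} (hM : M ~[atTop] Real.log) {c : ℝ} (hc : c ≠ 0) :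
    Tendsto (fun x => x * (x * √(Real.log x)) * M x / (c * (x * Real.log x)) ^ 2) atTop (𝓝 0) := by
  have hsimp : (fun x => c⁻¹ ^ 2 * (√(Real.log x))⁻¹)
      =ᶠ[atTop] fun x => x * (x * √(Real.log x)) / (c * (x * Real.log x)) ^ 2 * Real.log x := by
    filter_upwards [eventually_gt_atTop 1] with x hx
    have hlog : 0 < Real.log x := Real.log_pos hx
    have : 0 < x := zero_lt_one.trans hx
    field_simp
    exact (Real.sq_sqrt hlog.le).symm
  have hlim := ((Real.tendsto_sqrt_atTop.comp Real.tendsto_log_atTop).inv_tendsto_atTop.const_mul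
    (c⁻¹ ^ 2)).congr' hsimp
  rw [mul_zero] at hlim
  exact (IsEquivalent.refl.mul hM).symm.tendsto_nhds hlim |>.congr fun x => by
    simp only [Pi.mul_apply]; ring

section

variable {Ω : Type*} {mΩ : MeasurableSpace Ω} {μ : Measure Ω}

lemma integral_min_eq_intervalIntegral_measureReal_lt [IsFiniteMeasure μ] {X : Ω → ℝ}
    (hX : AEMeasurable X μ) (h0 : 0 ≤ᵐ[μ] X) {K : ℝ} (hK : 0 ≤ K) :
    ∫ ω, min (X ω) K ∂μ = ∫ t in 0..K, μ.real {ω | t < X ω} := by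
  have hint : Integrable (fun ω => min (X ω) K) μ :=
    (integrable_const K).mono' (hX.min aemeasurable_const).aestronglyMeasurable
      (h0.mono fun ω hω => by
        rw [Real.norm_eq_abs, abs_of_nonneg (le_min hω hK)]; exact min_le_right _ _)
  have hlevel : (fun t => μ.real {ω | t < min (X ω) K})
      = (Iio K).indicator fun t => μ.real {ω | t < X ω} := by
    ext t
    by_cases ht : t < K <;> simp [ht]
  rw [hint.integral_eq_integral_meas_lt (h0.mono fun ω hω => le_min hω hK), hlevel,
    setIntegral_indicator measurableSet_Iio, Ioi_inter_Iio, intervalIntegral.integral_of_le hK,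
    integral_Ioc_eq_integral_Ioo]

theorem isEquivalent_integral_min_log [IsFiniteMeasure μ] {X : Ω → ℝ} (hX : AEMeasurable X μ)
    (h0 : 0 ≤ᵐ[μ] X) (htail : (fun t => μ.real {ω | t < X ω}) ~[atTop] fun t => t⁻¹) :
    (fun K => ∫ ω, min (X ω) K ∂μ) ~[atTop] Real.log := by
  have hanti : Antitone fun t => μ.real {ω | t < X ω} := fun s t hst =>
    measureReal_mono fun ω hω => hst.trans_lt hω
  refine (isEquivalent_intervalIntegral_log (a := 0) (fun _ => hanti.intervalIntegrable)
    htail).congr_left ?_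
  filter_upwards [eventually_ge_atTop 0] with K hK
  exact (integral_min_eq_intervalIntegral_measureReal_lt hX h0 hK).symm

variable [IsProbabilityMeasure μ]

lemma variance_le_mul_integral_of_mem_Icc {Y : Ω → ℝ} (hY : AEMeasurable Y μ) {K : ℝ}
    (h : ∀ᵐ ω ∂μ, Y ω ∈ Icc 0 K) : Var[Y; μ] ≤ K * μ[Y] := by
  have hmean : 0 ≤ μ[Y] := integral_nonneg_of_ae (h.mono fun ω hω => hω.1)
  nlinarith [variance_le_sub_mul_sub h hY]

variable {X : ℕ → Ω → ℝ}

lemma measure_abs_sum_min_sub_ge_le (hident : ∀ i, IdentDistrib (X i) (X 0) μ μ)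
    (hindep : Pairwise fun i j => IndepFun (X i) (X j) μ) (h0 : 0 ≤ᵐ[μ] X 0)
    {K c : ℝ} (hK : 0 ≤ K) (hc : 0 < c) (n : ℕ) :
    μ {ω | c ≤ |∑ i ∈ Finset.range n, min (X i ω) K - n * ∫ ω, min (X 0 ω) K ∂μ|}
      ≤ ENNReal.ofReal (n * K * (∫ ω, min (X 0 ω) K ∂μ) / c ^ 2) := by
  set Y : ℕ → Ω → ℝ := fun i ω => min (X i ω) K
  have hmin : Measurable fun x : ℝ => min x K := measurable_id.min measurable_const
  have hYid : ∀ i, IdentDistrib (Y i) (Y 0) μ μ := fun i => (hident i).comp hmin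
  have hY0 : ∀ᵐ ω ∂μ, Y 0 ω ∈ Icc 0 K := h0.mono fun ω hω => ⟨le_min hω hK, min_le_right _ _⟩
  have hYmeas : AEMeasurable (Y 0) μ := hmin.comp_aemeasurable (hident 0).aemeasurable_fst
  have hL2 : ∀ i, MemLp (Y i) 2 μ := fun i =>
    (hYid i).memLp_iff.2 (memLp_of_bounded hY0 hYmeas.aestronglyMeasurable 2)
  set T : Ω → ℝ := ∑ i ∈ Finset.range n, Y i
  have hmean : μ[T] = (n : ℝ) * μ[Y 0] := by
    simp [T, integral_finsetSum _ fun i _ => (hL2 i).integrable one_le_two, (hYid _).integral_eq]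
  have hvar : Var[T; μ] ≤ (n : ℝ) * (K * μ[Y 0]) := by
    rw [IndepFun.variance_sum (fun i _ => hL2 i)
      fun i _ j _ hij => (hindep hij).comp hmin hmin]
    simp only [(hYid _).variance_eq, Finset.sum_const, Finset.card_range, nsmul_eq_mul]
    exact mul_le_mul_of_nonneg_left (variance_le_mul_integral_of_mem_Icc hYmeas hY0) n.cast_nonneg
  calc μ {ω | c ≤ |∑ i ∈ Finset.range n, Y i ω - n * μ[Y 0]|} = μ {ω | c ≤ |T ω - μ[T]|} := by
        rw [hmean]; simp [T, Finset.sum_apply]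
    _ ≤ ENNReal.ofReal (Var[T; μ] / c ^ 2) :=
        meas_ge_le_variance_div_sq (memLp_finsetSum' _ fun i _ => hL2 i) hc
    _ ≤ ENNReal.ofReal (n * K * μ[Y 0] / c ^ 2) := by
        gcongr; linarith

lemma measure_abs_sum_sub_ge_le (hident : ∀ i, IdentDistrib (X i) (X 0) μ μ)
    (hindep : Pairwise fun i j => IndepFun (X i) (X j) μ) (h0 : 0 ≤ᵐ[μ] X 0)
    {K c : ℝ} (hK : 0 ≤ K) (hc : 0 < c) (n : ℕ) :
    μ {ω | c ≤ |∑ i ∈ Finset.range n, X i ω - n * ∫ ω, min (X 0 ω) K ∂μ|}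
      ≤ ENNReal.ofReal (n * μ.real {ω | K < X 0 ω} + n * K * (∫ ω, min (X 0 ω) K ∂μ) / c ^ 2) := by
  set m := ∫ ω, min (X 0 ω) K ∂μ
  have hincl : {ω | c ≤ |∑ i ∈ Finset.range n, X i ω - n * m|}
      ⊆ (⋃ i ∈ Finset.range n, {ω | K < X i ω})
        ∪ {ω | c ≤ |∑ i ∈ Finset.range n, min (X i ω) K - n * m|} := by
    intro ω hω
    by_cases htrunc : ∀ i ∈ Finset.range n, X i ω ≤ K
    · right
      simpa only [mem_ofPred_eq, Finset.sum_congr rfl fun i hi => min_eq_left (htrunc i hi)]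
        using hω
    · push Not at htrunc
      left
      simpa using htrunc
  have hexceed : μ (⋃ i ∈ Finset.range n, {ω | K < X i ω})
      ≤ ENNReal.ofReal (n * μ.real {ω | K < X 0 ω}) := by
    refine (measure_biUnion_finset_le _ _).trans_eq ?_
    have hsame : ∀ i, μ {ω | K < X i ω} = μ {ω | K < X 0 ω} := fun i =>
      (hident i).measure_mem_eq measurableSet_Ioi
    simp [hsame, ENNReal.ofReal_mul, measureReal_def]
  calc μ {ω | c ≤ |∑ i ∈ Finset.range n, X i ω - n * m|}
      ≤ ENNReal.ofReal (n * μ.real {ω | K < X 0 ω}) + ENNReal.ofReal (n * K * m / c ^ 2) :=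
        (measure_mono hincl).trans <| (measure_union_le _ _).trans <|
          add_le_add hexceed (measure_abs_sum_min_sub_ge_le hident hindep h0 hK hc n)
    _ = _ := (ENNReal.ofReal_add (by positivity) (by
          have : 0 ≤ m := integral_nonneg_of_ae (h0.mono fun ω hω => le_min hω hK)
          positivity)).symm

lemma measure_abs_sum_div_sub_one_gt_le (hident : ∀ i, IdentDistrib (X i) (X 0) μ μ)
    (hindep : Pairwise fun i j => IndepFun (X i) (X j) μ) (h0 : 0 ≤ᵐ[μ] X 0)
    {K L ε : ℝ} (hK : 0 ≤ K) (hε : 0 < ε) {n : ℕ} (hB : 0 < n * L)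
    (hmean : |∫ ω, min (X 0 ω) K ∂μ - L| ≤ ε / 2 * L) :
    μ {ω | ε < |(∑ i ∈ Finset.range n, X i ω) / (n * L) - 1|}
      ≤ ENNReal.ofReal (n * μ.real {ω | K < X 0 ω}
        + n * K * (∫ ω, min (X 0 ω) K ∂μ) / (ε / 2 * (n * L)) ^ 2) := by
  set m := ∫ ω, min (X 0 ω) K ∂μ
  refine (measure_mono fun ω hω => ?_).trans
    (measure_abs_sum_sub_ge_le hident hindep h0 hK (by positivity) n)
  simp only [mem_ofPred_eq] at hω ⊢
  contrapose! hω
  rw [div_sub_one hB.ne', abs_div, abs_of_pos hB, div_le_iff₀ hB]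
  calc |∑ i ∈ Finset.range n, X i ω - n * L|
      = |(∑ i ∈ Finset.range n, X i ω - n * m) + n * (m - L)| := by ring_nf
    _ ≤ |∑ i ∈ Finset.range n, X i ω - n * m| + n * |m - L| :=
        (abs_add_le _ _).trans_eq (by rw [abs_mul, Nat.abs_cast])
    _ ≤ ε / 2 * (n * L) + n * (ε / 2 * L) :=
        add_le_add hω.le (mul_le_mul_of_nonneg_left hmean n.cast_nonneg)
    _ = ε * (n * L) := by ring

theorem tendsto_measure_abs_sum_div_mul_log_sub_one_gt (hident : ∀ i, IdentDistrib (X i) (X 0) μ μ)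
    (hindep : Pairwise fun i j => IndepFun (X i) (X j) μ) (h0 : 0 ≤ᵐ[μ] X 0)
    (htail : (fun t => μ.real {ω | t < X 0 ω}) ~[atTop] fun t => t⁻¹) {ε : ℝ} (hε : 0 < ε) :
    Tendsto (fun n : ℕ => μ {ω | ε < |(∑ i ∈ Finset.range n, X i ω) / (n * Real.log n) - 1|})
      atTop (𝓝 0) := by
  set k : ℝ → ℝ := fun x => x * √(Real.log x)
  set M : ℝ → ℝ := fun K => ∫ ω, min (X 0 ω) K ∂μ
  have hM : M ∘ k ~[atTop] Real.log :=
    ((isEquivalent_integral_min_log (hident 0).aemeasurable_fst h0 htail).comp_tendsto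
      tendsto_mul_sqrt_log_atTop).trans isEquivalent_log_mul_sqrt_log
  have hbound : ∀ᶠ n : ℕ in atTop,
      μ {ω | ε < |(∑ i ∈ Finset.range n, X i ω) / (n * Real.log n) - 1|}
        ≤ ENNReal.ofReal (n * μ.real {ω | k n < X 0 ω}
          + n * k n * M (k n) / (ε / 2 * (n * Real.log n)) ^ 2) := by
    filter_upwards [tendsto_natCast_atTop_atTop.eventually (hM.isLittleO.bound (half_pos hε)),
      eventually_ge_atTop 2] with n hmean hn
    have hlog : 0 < Real.log n := Real.log_pos (by exact_mod_cast hn)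
    simp only [Pi.sub_apply, Function.comp_apply, Real.norm_eq_abs, abs_of_pos hlog] at hmean
    exact measure_abs_sum_div_sub_one_gt_le hident hindep h0 (by positivity) hε
      (by positivity) hmean
  refine tendsto_of_tendsto_of_tendsto_of_le_of_le' tendsto_const_nhds ?_
    (Eventually.of_forall fun _ => zero_le) hbound
  simpa using ENNReal.tendsto_ofReal <|
    ((tendsto_mul_comp_mul_sqrt_log htail).add
      (tendsto_mul_sqrt_log_mul_div_sq hM (by positivity : ε / 2 ≠ 0))).comp
      tendsto_natCast_atTop_atTop

end

/-- When the i.i.d. overlaps have density `f` with `f(1-x) = 1 + O(x^δ)` as `x → 0+`,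
`S_n/(n log n) → 1` in probability, where `S_n = ∑_{i<n} 1/(1-p_i)`. -/
theorem stmt_3 {Ω : Type*} [MeasureSpace Ω] [IsProbabilityMeasure (ℙ : Measure Ω)]
    (δ : ℝ) (hδ : 0 < δ)
    (p : ℕ → Ω → ℝ) (hmeas : ∀ i, Measurable (p i))
    (hindep : iIndepFun p ℙ)
    (hident : ∀ i, Measure.map (p i) ℙ = Measure.map (p 0) ℙ)
    (hrange : ∀ i ω, p i ω ∈ Set.Icc (0 : ℝ) 1)
    (f : ℝ → ℝ)
    (hf : Measure.map (p 0) ℙ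
      = MeasureTheory.volume.withDensity (fun x => ENNReal.ofReal (f x)))
    (hasymp : (fun x => f (1 - x) - 1)
      =O[nhdsWithin 0 (Set.Ioi (0 : ℝ))] (fun x => x ^ δ)) :
    ∀ ε > 0, Tendsto
      (fun n : ℕ => ℙ {ω | ε <
        |(∑ i ∈ Finset.range n, 1 / (1 - p i ω)) / (n * Real.log n) - 1|})
      atTop (nhds 0) := by
  intro ε hε
  have hg : Measurable fun x : ℝ => 1 / (1 - x) := by fun_prop
  have hident' : ∀ i, IdentDistrib (fun ω => 1 / (1 - p i ω)) (fun ω => 1 / (1 - p 0 ω)) ℙ ℙ :=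
    fun i => (show IdentDistrib (p i) (p 0) ℙ ℙ from
      ⟨(hmeas i).aemeasurable, (hmeas 0).aemeasurable, hident i⟩).comp hg
  have hindep' : Pairwise fun i j =>
      IndepFun (fun ω => 1 / (1 - p i ω)) (fun ω => 1 / (1 - p j ω)) ℙ :=
    fun i j hij => (hindep.indepFun hij).comp hg hg
  have hnonneg : 0 ≤ᵐ[ℙ] fun ω => 1 / (1 - p 0 ω) :=
    ae_of_all _ fun ω => one_div_nonneg.2 (sub_nonneg.2 (hrange 0 ω).2)
  have htail : (fun t => (ℙ : Measure Ω).real {ω | t < 1 / (1 - p 0 ω)}) ~[atTop] fun t => t⁻¹ := by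
    refine (isEquivalent_measureReal_withDensity_Ioo
      (tendsto_of_isBigO_rpow_nhdsGT_zero hδ hasymp)).congr_left ?_
    filter_upwards [eventually_gt_atTop 0] with t ht
    rw [← hf, map_measureReal_apply (hmeas 0) measurableSet_Ioo, ← setOf_lt_one_div_sub ht]
    rfl
  exact tendsto_measure_abs_sum_div_mul_log_sub_one_gt hident' hindep' hnonneg htail hε
end

section
/- Let n ≥ 1 and p_1, …, p_n ∈ [0,1). For a nonempty subset s ⊆ {1, …, n} write p_s = ∏_{i∈s} p_i. Then ∑_{k=1}^∞ (1 − ∏_{i=1}^n (1 − p_i^k)) = ∑_{∅ ≠ s ⊆ {1,…,n}} (−1)^{|s|−1} (1/(1 − p_s) − 1), where both sides are finite. -/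
/-!
Expanding `1 - ∏ i, (1 - p i ^ k)` by inclusion–exclusion writes each summand as a fixed signed
combination of the geometric sequences `(p_s) ^ k`, with `|p_s| < 1` for nonempty `s`; these are
summed separately and the finite combination commutes with the series.
-/

open Finset

theorem Finset.one_sub_prod_one_sub {ι R : Type*} [CommRing R] (s : Finset ι) (x : ι → R) :
    1 - ∏ i ∈ s, (1 - x i)
      = ∑ t ∈ s.powerset.filter (fun t => t.Nonempty), (-1) ^ (#t - 1) * ∏ i ∈ t, x i := by
  classical
  have hempty : s.powerset.filter (fun t => ¬ t.Nonempty) = {∅} := by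
    ext t
    simp only [mem_filter, mem_powerset, not_nonempty_iff_eq_empty, mem_singleton]
    exact ⟨And.right, fun ht => ⟨ht ▸ empty_subset s, ht⟩⟩
  rw [prod_sub, ← sum_filter_add_sum_filter_not _ (fun t => t.Nonempty), hempty]
  simp only [sum_singleton, card_empty, prod_empty, prod_const_one, pow_zero, mul_one]
  rw [sub_add_cancel_right, ← sum_neg_distrib]
  refine sum_congr rfl fun t ht => ?_
  obtain ⟨k, hk⟩ : ∃ k, #t = k + 1 := Nat.exists_eq_add_one.2 (card_pos.2 (mem_filter.1 ht).2)
  rw [hk, pow_succ]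
  simp

theorem Finset.abs_prod_lt_one {ι : Type*} {s : Finset ι} {x : ι → ℝ} (hs : s.Nonempty)
    (hx : ∀ i ∈ s, |x i| < 1) : |∏ i ∈ s, x i| < 1 := by
  classical
  obtain ⟨j, hj⟩ := hs
  rw [abs_prod, ← mul_prod_erase _ _ hj]
  calc |x j| * ∏ i ∈ s.erase j, |x i| ≤ |x j| * 1 := by
        gcongr
        exact prod_le_one (fun i _ => abs_nonneg _) fun i hi => (hx i (mem_of_mem_erase hi)).le
    _ < 1 := by simpa using hx j hj

theorem hasSum_geometric_succ_of_abs_lt_one {r : ℝ} (h : |r| < 1) :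
    HasSum (fun k : ℕ => r ^ (k + 1)) ((1 - r)⁻¹ - 1) := by
  simpa using (hasSum_nat_add_iff' 1).mpr (hasSum_geometric_of_abs_lt_one h)

theorem stmt_12_general (n : ℕ) (p : Fin n → ℝ)
    (hp : ∀ i, p i ∈ Set.Ico (0 : ℝ) 1) :
    Summable (fun k : ℕ => 1 - ∏ i, (1 - p i ^ (k + 1))) ∧
    ∑' k : ℕ, (1 - ∏ i, (1 - p i ^ (k + 1)))
      = ∑ s ∈ Finset.univ.powerset.filter (fun s : Finset (Fin n) => s.Nonempty),
          (-1 : ℝ) ^ (s.card - 1) * (1 / (1 - ∏ i ∈ s, p i) - 1) := by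
  have hp_abs : ∀ i ∈ (univ : Finset (Fin n)), |p i| < 1 := fun i _ =>
    abs_lt.2 ⟨by linarith [(hp i).1], (hp i).2⟩
  have hexpand : ∀ k : ℕ, 1 - ∏ i, (1 - p i ^ (k + 1))
      = ∑ s ∈ univ.powerset.filter (fun s : Finset (Fin n) => s.Nonempty),
          (-1 : ℝ) ^ (s.card - 1) * (∏ i ∈ s, p i) ^ (k + 1) := fun k => by
    rw [one_sub_prod_one_sub]
    simp only [prod_pow]
  have hsum : HasSum (fun k : ℕ => 1 - ∏ i, (1 - p i ^ (k + 1)))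
      (∑ s ∈ univ.powerset.filter (fun s : Finset (Fin n) => s.Nonempty),
          (-1 : ℝ) ^ (s.card - 1) * (1 / (1 - ∏ i ∈ s, p i) - 1)) := by
    simp only [hexpand, one_div]
    refine hasSum_sum fun s hs => (hasSum_geometric_succ_of_abs_lt_one ?_).mul_left _
    obtain ⟨hsub, hne⟩ := mem_filter.1 hs
    exact abs_prod_lt_one hne fun i hi => hp_abs i (mem_powerset.1 hsub hi)
  exact ⟨hsum.summable, hsum.tsum_eq⟩

/-- Inclusion–exclusion for the expected batch-learning time:
`∑_{k≥1} (1 - ∏_i (1 - p_i^k)) = ∑_{∅ ≠ s ⊆ {1,…,n}} (-1)^{|s|-1} (1/(1-p_s) - 1)`,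
both sides being finite. -/
theorem stmt_12 (n : ℕ) (hn : 1 ≤ n) (p : Fin n → ℝ)
    (hp : ∀ i, p i ∈ Set.Ico (0 : ℝ) 1) :
    Summable (fun k : ℕ => 1 - ∏ i, (1 - p i ^ (k + 1))) ∧
    ∑' k : ℕ, (1 - ∏ i, (1 - p i ^ (k + 1)))
      = ∑ s ∈ Finset.univ.powerset.filter (fun s : Finset (Fin n) => s.Nonempty),
          (-1 : ℝ) ^ (s.card - 1) * (1 / (1 - ∏ i ∈ s, p i) - 1) :=
  stmt_12_general n p hp
end

section
/- Let n ≥ 2 and let x_1, …, x_n be i.i.d. random variables uniformly distributed on [0,1]. Then E[1/(1 − x_1 x_2 ⋯ x_n)] = ζ(n), where ζ is the Riemann zeta function. -/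
/-!
Expand `1 / (1 - x₁⋯xₙ)` as the geometric series `∑ₖ (x₁⋯xₙ)ᵏ`. By monotone convergence and
independence, `E[(x₁⋯xₙ)ᵏ] = ∏ᵢ E[xᵢᵏ] = (k + 1)⁻ⁿ`, and summing over `k` gives `ζ(n)`.
In `ℝ≥0∞` the identity `∑ₖ rᵏ = (1 - r)⁻¹` holds for every `r`, so the interchange of sum and
integral needs no convergence argument.
-/

open MeasureTheory ProbabilityTheory

open scoped ENNReal

theorem lintegral_inv_one_sub_prod_eq_tsum {Ω ι : Type*} [MeasurableSpace Ω] {μ : Measure Ω}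
    [Fintype ι] {Y : ι → Ω → ℝ≥0∞} (hY : iIndepFun Y μ) (hmeas : ∀ i, Measurable (Y i)) :
    ∫⁻ ω, (1 - ∏ i, Y i ω)⁻¹ ∂μ = ∑' k : ℕ, ∏ i, ∫⁻ ω, Y i ω ^ k ∂μ := by
  simp_rw [← ENNReal.tsum_geometric, ← Finset.prod_pow]
  rw [lintegral_tsum fun k => by fun_prop]
  refine tsum_congr fun k => ?_
  exact lintegral_prod_eq_prod_lintegral_of_indepFun _ _
    (hY.comp (fun _ t => t ^ k) fun _ => by fun_prop) fun i => by fun_prop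

section

variable {ι : Type*} [Fintype ι] [Nonempty ι] {a : ι → ℝ}

theorem prod_lt_one_of_forall_mem_Ico (ha : ∀ i, a i ∈ Set.Ico 0 1) : ∏ i, a i < 1 := by
  obtain ⟨j⟩ := ‹Nonempty ι›
  calc ∏ i, a i ≤ ∏ i ∈ {j}, a i :=
        Finset.prod_le_prod_of_subset_of_le_one (Finset.subset_univ _) (fun i _ => (ha i).1)
          fun i _ _ => (ha i).2.le
    _ < 1 := by simpa using (ha j).2

theorem ENNReal.ofReal_one_div_one_sub_prod (ha : ∀ i, a i ∈ Set.Ico 0 1) :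
    ENNReal.ofReal (1 / (1 - ∏ i, a i)) = (1 - ∏ i, ENNReal.ofReal (a i))⁻¹ := by
  rw [← ENNReal.ofReal_prod_of_nonneg fun i _ => (ha i).1, ← ENNReal.ofReal_one,
    ← ENNReal.ofReal_sub _ (Finset.prod_nonneg fun i _ => (ha i).1), one_div,
    ENNReal.ofReal_inv_of_pos (sub_pos.2 (prod_lt_one_of_forall_mem_Ico ha))]

end

theorem lintegral_Icc_ofReal_pow (k : ℕ) :
    ∫⁻ t in Set.Icc (0 : ℝ) 1, ENNReal.ofReal t ^ k = ((k : ℝ≥0∞) + 1)⁻¹ := by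
  have hpow : ∀ᵐ t ∂volume.restrict (Set.Icc (0 : ℝ) 1),
      ENNReal.ofReal t ^ k = ENNReal.ofReal (t ^ k) := by
    filter_upwards [ae_restrict_mem measurableSet_Icc] with t ht
    exact (ENNReal.ofReal_pow ht.1 k).symm
  rw [lintegral_congr_ae hpow, ← ofReal_integral_eq_lintegral_ofReal
    (continuous_pow k).integrableOn_Icc, integral_Icc_eq_integral_Ioc,
    ← intervalIntegral.integral_of_le zero_le_one, integral_pow]
  · rw [one_pow, zero_pow k.succ_ne_zero, sub_zero, one_div,
      ENNReal.ofReal_inv_of_pos k.cast_add_one_pos]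
    norm_cast
  · filter_upwards [ae_restrict_mem measurableSet_Icc] with t ht
    exact pow_nonneg ht.1 k

theorem riemannZeta_natCast_eq_toReal_tsum {n : ℕ} (hn : 1 < n) :
    riemannZeta n = ((∑' k : ℕ, ((k : ℝ≥0∞) + 1)⁻¹ ^ n).toReal : ℂ) := by
  rw [ENNReal.tsum_toReal_eq fun k => by simp, Complex.ofReal_tsum,
    zeta_eq_tsum_one_div_nat_add_one_cpow (by simpa using hn)]
  refine tsum_congr fun k => ?_
  simp [ENNReal.toReal_add]

/-- For `n ≥ 2` and `x₁, …, xₙ` i.i.d. uniform on `[0,1]`,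
`E[1/(1 - x₁⋯xₙ)] = ζ(n)`, the Riemann zeta function at `n`. -/
theorem stmt_14 {Ω : Type*} [MeasureSpace Ω] [IsProbabilityMeasure (ℙ : Measure Ω)]
    (n : ℕ) (hn : 2 ≤ n) (x : Fin n → Ω → ℝ)
    (hmeas : ∀ i, Measurable (x i))
    (hindep : iIndepFun x ℙ)
    (hlaw : ∀ i, Measure.map (x i) ℙ
      = MeasureTheory.volume.restrict (Set.Icc (0 : ℝ) 1)) :
    ((∫ ω, 1 / (1 - ∏ i, x i ω) : ℝ) : ℂ) = riemannZeta n := by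
  have : Nonempty (Fin n) := ⟨⟨0, by omega⟩⟩
  have hIco : ∀ᵐ ω ∂(ℙ : Measure Ω), ∀ i, x i ω ∈ Set.Ico 0 1 := by
    refine ae_all_iff.2 fun i => ae_of_ae_map (hmeas i).aemeasurable ?_
    rw [hlaw i, ← Measure.restrict_congr_set Ico_ae_eq_Icc]
    exact ae_restrict_mem measurableSet_Ico
  have hmoment (i : Fin n) (k : ℕ) :
      ∫⁻ ω, ENNReal.ofReal (x i ω) ^ k = ((k : ℝ≥0∞) + 1)⁻¹ := by
    rw [← lintegral_map (ENNReal.measurable_ofReal.pow_const k) (hmeas i), hlaw i,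
      lintegral_Icc_ofReal_pow]
  have hnonneg : 0 ≤ᵐ[ℙ] fun ω => 1 / (1 - ∏ i, x i ω) := by
    filter_upwards [hIco] with ω hω
    exact one_div_nonneg.2 (sub_nonneg.2 (prod_lt_one_of_forall_mem_Ico hω).le)
  rw [integral_eq_lintegral_of_nonneg_ae hnonneg (by fun_prop : Measurable _).aestronglyMeasurable,
    lintegral_congr_ae (hIco.mono fun ω => ENNReal.ofReal_one_div_one_sub_prod),
    lintegral_inv_one_sub_prod_eq_tsum (Y := fun i ω => ENNReal.ofReal (x i ω))
      (hindep.comp (fun _ => ENNReal.ofReal) fun _ => ENNReal.measurable_ofReal)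
      fun i => (hmeas i).ennreal_ofReal, riemannZeta_natCast_eq_toReal_tsum hn]
  simp_rw [hmoment, Finset.prod_const, Finset.card_univ, Fintype.card_fin]
end

section
/- Let n ≥ 1 and let p_1, …, p_n be i.i.d. random variables with common law F supported in [0,1], with moments m_j = ∫ x^j dF(x), and suppose ∑_{j=1}^∞ m_j < ∞. Then E[∑_{k=1}^∞ (1 − ∏_{i=1}^n (1 − p_i^k))] = ∑_{j=1}^∞ (1 − (1 − m_j)^n) = ∑_{k=1}^n binom(n,k) (−1)^{k−1} ζ_F(k), where ζ_F(s) = ∑_{j=1}^∞ m_j^s is the moment zeta function of F. -/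
/-!
By independence, the `k`-th summand `1 - ∏ i, (1 - p_i ^ k)` has expectation
`1 - (1 - m_k) ^ n`. The summands take values in `[0, 1]`, so their `L¹` norms are these
expectations, and the binomial theorem writes `∑_k (1 - (1 - m_k) ^ n)` as a finite combination
of the series `ζ_F(s) = ∑_k m_k ^ s`, `1 ≤ s ≤ n`, which converge because `m_k ^ s ≤ m_k`.
Hence expectation and summation commute.
-/

open MeasureTheory ProbabilityTheory Finset

lemma prod_one_sub_mem_Icc {ι R : Type*} [CommRing R] [PartialOrder R] [IsOrderedRing R]
    {s : Finset ι} {a : ι → R} (ha : ∀ i ∈ s, a i ∈ Set.Icc 0 1) :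
    ∏ i ∈ s, (1 - a i) ∈ Set.Icc (0 : R) 1 :=
  ⟨prod_nonneg fun i hi => sub_nonneg.2 (ha i hi).2,
    prod_le_one (fun i hi => sub_nonneg.2 (ha i hi).2) fun i hi => sub_le_self _ (ha i hi).1⟩

lemma one_sub_one_sub_pow {R : Type*} [CommRing R] (x : R) (n : ℕ) :
    1 - (1 - x) ^ n = ∑ k ∈ Icc 1 n, (n.choose k : R) * (-1) ^ (k - 1) * x ^ k := by
  rw [← Ico_add_one_right_eq_Icc, sum_Ico_eq_sum_range, Nat.add_sub_cancel,
    show 1 - x = -x + 1 by ring, add_pow, sum_range_succ']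
  simp only [one_pow, mul_one, pow_zero, Nat.choose_zero_right, Nat.cast_one, sub_add_cancel_right,
    add_comm 1, Nat.add_sub_cancel]
  rw [← sum_neg_distrib]
  exact sum_congr rfl fun k _ => by rw [neg_pow]; ring

lemma hasSum_one_sub_one_sub_pow {x : ℕ → ℝ} (hx : ∀ j, x j ∈ Set.Icc 0 1)
    (hsum : Summable x) (n : ℕ) :
    HasSum (fun j => 1 - (1 - x j) ^ n)
      (∑ k ∈ Icc 1 n, (n.choose k : ℝ) * (-1) ^ (k - 1) * ∑' j, x j ^ k) := by
  simp_rw [one_sub_one_sub_pow, ← tsum_mul_left]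
  refine hasSum_sum fun k hk => (Summable.mul_left _ ?_).hasSum
  have hk0 : k ≠ 0 := Nat.one_le_iff_ne_zero.1 (mem_Icc.1 hk).1
  exact hsum.of_nonneg_of_le (fun j => pow_nonneg (hx j).1 k)
    fun j => pow_le_of_le_one (hx j).1 (hx j).2 hk0

namespace MeasureTheory

lemma integral_mem_Icc_zero_one {α : Type*} [MeasurableSpace α] {ν : Measure α}
    [IsProbabilityMeasure ν] {f : α → ℝ} (hf : ∀ᵐ x ∂ν, f x ∈ Set.Icc 0 1) :
    ∫ x, f x ∂ν ∈ Set.Icc 0 1 := by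
  refine ⟨integral_nonneg_of_ae (hf.mono fun x hx => hx.1), ?_⟩
  calc ∫ x, f x ∂ν ≤ ∫ _, (1 : ℝ) ∂ν :=
        integral_mono_of_nonneg (hf.mono fun x hx => hx.1) (integrable_const 1)
          (hf.mono fun x hx => hx.2)
    _ = 1 := by simp

end MeasureTheory

namespace ProbabilityTheory

variable {α Ω ι : Type*} [MeasurableSpace α] [MeasurableSpace Ω] [Fintype ι]
  {ν : Measure α} {μ : Measure Ω} {X : ι → Ω → α} {f : α → ℝ}

lemma iIndepFun.integral_prod_comp_eq_pow (hX : iIndepFun X μ) (mX : ∀ i, AEMeasurable (X i) μ)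
    (hlaw : ∀ i, μ.map (X i) = ν) (hf : AEStronglyMeasurable f ν) :
    ∫ ω, ∏ i, f (X i ω) ∂μ = (∫ x, f x ∂ν) ^ Fintype.card ι := by
  rw [hX.integral_fun_prod_comp mX fun i => hlaw i ▸ hf, ← card_univ, ← prod_const]
  refine prod_congr rfl fun i _ => ?_
  rw [← integral_map (mX i) (hlaw i ▸ hf), hlaw i]

lemma ae_prod_one_sub_comp_mem_Icc (mX : ∀ i, AEMeasurable (X i) μ)
    (hlaw : ∀ i, μ.map (X i) = ν) (hf01 : ∀ᵐ x ∂ν, f x ∈ Set.Icc 0 1) :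
    ∀ᵐ ω ∂μ, ∏ i, (1 - f (X i ω)) ∈ Set.Icc 0 1 := by
  have hX01 : ∀ᵐ ω ∂μ, ∀ i, f (X i ω) ∈ Set.Icc 0 1 :=
    ae_all_iff.2 fun i => ae_of_ae_map (mX i) (hlaw i ▸ hf01)
  exact hX01.mono fun ω hω => prod_one_sub_mem_Icc fun i _ => hω i

lemma integrable_prod_one_sub_comp [IsFiniteMeasure μ] (mX : ∀ i, Measurable (X i))
    (hlaw : ∀ i, μ.map (X i) = ν) (hf : Measurable f)
    (hf01 : ∀ᵐ x ∂ν, f x ∈ Set.Icc 0 1) :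
    Integrable (fun ω => ∏ i, (1 - f (X i ω))) μ := by
  have hmeas : Measurable fun ω => ∏ i, (1 - f (X i ω)) := by fun_prop
  refine .of_bound hmeas.aestronglyMeasurable 1 ?_
  filter_upwards [ae_prod_one_sub_comp_mem_Icc (fun i => (mX i).aemeasurable) hlaw hf01] with ω h
  rw [Real.norm_of_nonneg h.1]
  exact h.2

lemma iIndepFun.integral_one_sub_prod_one_sub_comp [IsProbabilityMeasure μ]
    [IsProbabilityMeasure ν] (hX : iIndepFun X μ) (mX : ∀ i, Measurable (X i))
    (hlaw : ∀ i, μ.map (X i) = ν) (hf : Measurable f)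
    (hf01 : ∀ᵐ x ∂ν, f x ∈ Set.Icc 0 1) :
    ∫ ω, (1 - ∏ i, (1 - f (X i ω))) ∂μ = 1 - (1 - ∫ x, f x ∂ν) ^ Fintype.card ι := by
  have hfint : Integrable f ν := .of_bound hf.aestronglyMeasurable 1 (hf01.mono fun x hx => by
    rw [Real.norm_of_nonneg hx.1]; exact hx.2)
  rw [integral_sub (integrable_const 1) (integrable_prod_one_sub_comp mX hlaw hf hf01),
    hX.integral_prod_comp_eq_pow (f := fun x => 1 - f x) (fun i => (mX i).aemeasurable) hlaw
      (by fun_prop),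
    integral_sub (integrable_const 1) hfint]
  simp

end ProbabilityTheory

theorem stmt_16_general {Ω : Type*} [MeasureSpace Ω] [IsProbabilityMeasure (ℙ : Measure Ω)]
    (n : ℕ) (F : Measure ℝ) [IsProbabilityMeasure F]
    (hsupp : F (Set.Icc (0 : ℝ) 1)ᶜ = 0)
    (p : Fin n → Ω → ℝ) (hmeas : ∀ i, Measurable (p i))
    (hindep : iIndepFun p ℙ)
    (hlaw : ∀ i, Measure.map (p i) ℙ = F)
    (m : ℕ → ℝ) (hm : ∀ j, m j = ∫ x, x ^ j ∂F)
    (hsum : Summable (fun j : ℕ => m (j + 1))) :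
    ∫ ω, (∑' k : ℕ, (1 - ∏ i, (1 - p i ω ^ (k + 1))))
        = ∑' j : ℕ, (1 - (1 - m (j + 1)) ^ n) ∧
    ∑' j : ℕ, (1 - (1 - m (j + 1)) ^ n)
        = ∑ k ∈ Finset.Icc 1 n,
            (n.choose k : ℝ) * (-1) ^ (k - 1) * ∑' j : ℕ, m (j + 1) ^ k := by
  have hF : ∀ᵐ x ∂F, x ∈ Set.Icc (0 : ℝ) 1 := ae_iff.2 hsupp
  have hpow : ∀ k, ∀ᵐ x ∂F, x ^ k ∈ Set.Icc (0 : ℝ) 1 :=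
    fun k => hF.mono fun x hx => ⟨pow_nonneg hx.1 k, pow_le_one₀ hx.1 hx.2⟩
  have hm01 : ∀ j, m j ∈ Set.Icc 0 1 := fun j => hm j ▸ integral_mem_Icc_zero_one (hpow j)
  have hterm : ∀ k : ℕ, ∫ ω, (1 - ∏ i, (1 - p i ω ^ (k + 1))) = 1 - (1 - m (k + 1)) ^ n :=
    fun k => by
      rw [hindep.integral_one_sub_prod_one_sub_comp (f := (· ^ (k + 1))) hmeas hlaw (by fun_prop)
        (hpow (k + 1)), Fintype.card_fin, hm]
  have hnorm : ∀ k : ℕ, ∫ ω, ‖1 - ∏ i, (1 - p i ω ^ (k + 1))‖ =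
      ∫ ω, (1 - ∏ i, (1 - p i ω ^ (k + 1))) := fun k =>
    integral_congr_ae <| (ae_prod_one_sub_comp_mem_Icc (f := (· ^ (k + 1)))
      (fun i => (hmeas i).aemeasurable) hlaw (hpow (k + 1))).mono
        fun ω h => Real.norm_of_nonneg (sub_nonneg.2 h.2)
  have hsum' := hasSum_one_sub_one_sub_pow (fun j => hm01 (j + 1)) hsum n
  refine ⟨?_, hsum'.tsum_eq⟩
  have hint : ∀ k : ℕ, Integrable (fun ω => 1 - ∏ i, (1 - p i ω ^ (k + 1))) ℙ := fun k =>
    (integrable_const 1).sub <|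
      integrable_prod_one_sub_comp (f := (· ^ (k + 1))) hmeas hlaw (by fun_prop) (hpow (k + 1))
  rw [← integral_tsum_of_summable_integral_norm hint
    (by simpa only [hnorm, hterm] using hsum'.summable)]
  exact tsum_congr hterm

/-- The expectation of the batch-learning convergence time, in terms of moments:
`E[∑_{k≥1} (1 - ∏_i (1 - p_i^k))] = ∑_{j≥1} (1 - (1 - m_j)^n)
  = ∑_{k=1}^n C(n,k) (-1)^{k-1} ζ_F(k)`,
where `ζ_F(s) = ∑_{j≥1} m_j^s` is the moment zeta function of the common law. -/
theorem stmt_16 {Ω : Type*} [MeasureSpace Ω] [IsProbabilityMeasure (ℙ : Measure Ω)]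
    (n : ℕ) (hn : 1 ≤ n) (F : Measure ℝ) [IsProbabilityMeasure F]
    (hsupp : F (Set.Icc (0 : ℝ) 1)ᶜ = 0)
    (p : Fin n → Ω → ℝ) (hmeas : ∀ i, Measurable (p i))
    (hindep : iIndepFun p ℙ)
    (hlaw : ∀ i, Measure.map (p i) ℙ = F)
    (m : ℕ → ℝ) (hm : ∀ j, m j = ∫ x, x ^ j ∂F)
    (hsum : Summable (fun j : ℕ => m (j + 1))) :
    ∫ ω, (∑' k : ℕ, (1 - ∏ i, (1 - p i ω ^ (k + 1))))
        = ∑' j : ℕ, (1 - (1 - m (j + 1)) ^ n) ∧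
    ∑' j : ℕ, (1 - (1 - m (j + 1)) ^ n)
        = ∑ k ∈ Finset.Icc 1 n,
            (n.choose k : ℝ) * (-1) ^ (k - 1) * ∑' j : ℕ, m (j + 1) ^ k :=
  stmt_16_general n F hsupp p hmeas hindep hlaw m hm hsum
end

section
/- Let α > 1 and c > 0, and let (m_j)_{j≥1} be a nonincreasing sequence with 0 < m_j < 1 for all j and lim_{j→∞} j^α m_j = c. Then lim_{n→∞} n^{−1/α} ∑_{j=1}^∞ (1 − (1 − m_j)^n) = ∫_0^∞ (1 − exp(−c u^{−α})) du; in particular, ∑_{j=1}^∞ (1 − (1 − m_j)^n) = Θ(n^{1/α}) as n → ∞. -/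
/-!
Writing a series as the integral of a step function, `∑ a_j = ∫₀^∞ a_⌊x⌋ dx`, and substituting
`x = u n^{1/α}` gives
`n^{-1/α} ∑_j (1 - (1 - m_j)^n) = ∫₀^∞ (1 - (1 - m_⌊u n^{1/α}⌋)^n) du`.
For fixed `u > 0`, `n m_⌊u n^{1/α}⌋ → c u^{-α}`, so the integrand tends to `1 - exp(-c u^{-α})`.
Bernoulli's inequality together with `m_j ≤ C (j + 1)^{-α}` dominates it by `min 1 (C u^{-α})`,
which is integrable on `(0, ∞)` because `α > 1`, so dominated convergence gives the limit.
The limit is positive, which yields the `Θ(n^{1/α})` bounds.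
-/

open Filter MeasureTheory Set Topology

theorem natFloor_preimage_singleton_inter_Ici (j : ℕ) :
    (Nat.floor : ℝ → ℕ) ⁻¹' {j} ∩ Ici 0 = Ico (j : ℝ) (j + 1) := by
  ext x
  simp only [mem_inter_iff, mem_preimage, mem_singleton_iff, mem_Ici, mem_Ico]
  constructor
  · rintro ⟨hj, hx⟩
    exact (Nat.floor_eq_iff hx).1 hj
  · rintro ⟨hjx, hxj⟩
    have hx : 0 ≤ x := (Nat.cast_nonneg j).trans hjx
    exact ⟨(Nat.floor_eq_iff hx).2 ⟨hjx, hxj⟩, hx⟩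

theorem map_natFloor_volume_Ioi :
    (volume.restrict (Ioi (0 : ℝ))).map Nat.floor = Measure.count := by
  refine Measure.ext_of_singleton fun j => ?_
  rw [Measure.restrict_congr_set Ioi_ae_eq_Ici,
    Measure.map_apply Nat.measurable_floor (measurableSet_singleton j),
    Measure.restrict_apply (measurableSet_singleton j |>.preimage Nat.measurable_floor),
    natFloor_preimage_singleton_inter_Ici]
  simp

theorem integral_Ioi_natFloor {E : Type*} [NormedAddCommGroup E] [NormedSpace ℝ E]
    [CompleteSpace E] {g : ℕ → E} (hg : Summable (‖g ·‖)) :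
    ∫ x in Ioi (0 : ℝ), g ⌊x⌋₊ = ∑' j, g j := by
  rw [← integral_map Nat.measurable_floor.aemeasurable
      AEStronglyMeasurable.of_discrete, map_natFloor_volume_Ioi,
    integral_countable (integrable_count_iff.2 hg)]
  simp

theorem integral_Ioi_natFloor_mul {E : Type*} [NormedAddCommGroup E] [NormedSpace ℝ E]
    [CompleteSpace E] {g : ℕ → E} (hg : Summable (‖g ·‖)) {t : ℝ} (ht : 0 < t) :
    ∫ u in Ioi (0 : ℝ), g ⌊u * t⌋₊ = t⁻¹ • ∑' j, g j := by
  rw [integral_comp_mul_right_Ioi (fun x => g ⌊x⌋₊) 0 ht, zero_mul, integral_Ioi_natFloor hg]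

theorem mul_rpow_one_div_rpow {u x α : ℝ} (hu : 0 ≤ u) (hx : 0 ≤ x) (hα : α ≠ 0) :
    (u * x ^ (1 / α)) ^ α = u ^ α * x := by
  rw [Real.mul_rpow hu (by positivity), one_div, Real.rpow_inv_rpow hx hα]

theorem one_sub_one_sub_pow_le_mul {x : ℝ} (hx : x ≤ 2) (n : ℕ) : 1 - (1 - x) ^ n ≤ n * x := by
  have := one_add_mul_le_pow (a := -x) (by linarith) n
  rw [← sub_eq_add_neg] at this
  linarith

theorem one_sub_one_sub_pow_mem_Icc {x : ℝ} (hx : x ∈ Icc (0 : ℝ) 1) (n : ℕ) :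
    1 - (1 - x) ^ n ∈ Icc (0 : ℝ) 1 := by
  have h0 : 0 ≤ 1 - x := by linarith [hx.2]
  have h1 : 1 - x ≤ 1 := by linarith [hx.1]
  constructor
  · linarith [pow_le_one₀ h0 h1 (n := n)]
  · linarith [pow_nonneg h0 n]

theorem summable_norm_one_sub_one_sub_pow {m : ℕ → ℝ} (hm : ∀ j, m j ∈ Icc (0 : ℝ) 1)
    (hsum : Summable m) (n : ℕ) : Summable fun j => ‖1 - (1 - m j) ^ n‖ :=
  .of_nonneg_of_le (fun _ => norm_nonneg _)
    (fun j => (Real.norm_of_nonneg (one_sub_one_sub_pow_mem_Icc (hm j) n).1).trans_le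
      (one_sub_one_sub_pow_le_mul (by linarith [(hm j).2]) n))
    (hsum.mul_left (n : ℝ))

theorem exists_pos_mul_le_and_le_mul_of_tendsto_inv_mul {ι : Type*} {l : Filter ι}
    {w S : ι → ℝ} {L : ℝ} (hw : ∀ᶠ i in l, 0 < w i) (hL : 0 < L)
    (h : Tendsto (fun i => (w i)⁻¹ * S i) l (𝓝 L)) :
    ∃ C₁ C₂ : ℝ, 0 < C₁ ∧ 0 < C₂ ∧ ∀ᶠ i in l, C₁ * w i ≤ S i ∧ S i ≤ C₂ * w i := by
  refine ⟨L / 2, 2 * L, by positivity, by positivity, ?_⟩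
  filter_upwards [hw, h.eventually (Ioo_mem_nhds (half_lt_self hL) (show L < 2 * L by linarith))]
    with i hwi ⟨hlo, hhi⟩
  rw [inv_mul_eq_div, lt_div_iff₀ hwi] at hlo
  rw [inv_mul_eq_div, div_lt_iff₀ hwi] at hhi
  exact ⟨hlo.le, hhi.le⟩

theorem integrableOn_min_one_mul_rpow_neg {α C : ℝ} (hα : 1 < α) (hC : 0 ≤ C) :
    IntegrableOn (fun u : ℝ => min 1 (C * u ^ (-α))) (Ioi 0) := by
  have hmeas : Measurable fun u : ℝ => min 1 (C * u ^ (-α)) := by fun_prop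
  have hnonneg : ∀ u : ℝ, 0 < u → 0 ≤ min 1 (C * u ^ (-α)) := fun u hu => by positivity
  rw [← Ioc_union_Ioi_eq_Ioi zero_le_one]
  refine IntegrableOn.union ?_ ?_
  · refine (integrableOn_const (C := 1) (by simp)).mono' hmeas.aestronglyMeasurable ?_
    refine (ae_restrict_iff' measurableSet_Ioc).2 (.of_forall fun u hu => ?_)
    rw [Real.norm_of_nonneg (hnonneg u hu.1)]
    exact min_le_left _ _
  · refine ((integrableOn_Ioi_rpow_of_lt (show -α < -1 by linarith) one_pos).const_mul C).mono'
      hmeas.aestronglyMeasurable ?_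
    refine (ae_restrict_iff' measurableSet_Ioi).2 (.of_forall fun u (hu : 1 < u) => ?_)
    rw [Real.norm_of_nonneg (hnonneg u (by linarith))]
    exact min_le_right _ _

section DecayRate

variable {α c : ℝ} {m : ℕ → ℝ}

theorem tendsto_rpow_mul_of_div_tendsto_one {ι : Type*} {l : Filter ι}
    (hlim : Tendsto (fun j : ℕ => (j : ℝ) ^ α * m j) atTop (𝓝 c))
    {k : ι → ℕ} {s : ι → ℝ} (hk : Tendsto k l atTop)
    (hks : Tendsto (fun i => (k i : ℝ) / s i) l (𝓝 1)) :
    Tendsto (fun i => s i ^ α * m (k i)) l (𝓝 c) := by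
  have hpow : Tendsto (fun i => ((k i : ℝ) / s i) ^ (-α)) l (𝓝 1) := by
    simpa using hks.rpow_const (Or.inl one_ne_zero)
  have hprod :
      Tendsto (fun i => ((k i : ℝ) / s i) ^ (-α) * ((k i : ℝ) ^ α * m (k i))) l (𝓝 c) := by
    simpa using hpow.mul (hlim.comp hk)
  refine hprod.congr' ?_
  filter_upwards [hk.eventually_gt_atTop 0, hks.eventually (lt_mem_nhds one_pos)]
    with i hki hks_pos
  have hk0 : (0 : ℝ) < k i := by exact_mod_cast hki
  have hs : 0 < s i := (div_pos_iff_of_pos_left hk0).1 hks_pos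
  rw [Real.div_rpow hk0.le hs.le, Real.rpow_neg hk0.le, Real.rpow_neg hs.le]
  field_simp

theorem exists_le_mul_add_one_rpow_neg
    (hlim : Tendsto (fun j : ℕ => (j : ℝ) ^ α * m j) atTop (𝓝 c)) :
    ∃ C, ∀ j : ℕ, m j ≤ C * ((j : ℝ) + 1) ^ (-α) := by
  obtain ⟨C, hC⟩ := (tendsto_rpow_mul_of_div_tendsto_one hlim tendsto_id
    (tendsto_natCast_div_add_atTop (1 : ℝ))).bddAbove_range
  refine ⟨C, fun j => ?_⟩
  have hj : (0 : ℝ) < j + 1 := by positivity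
  rw [Real.rpow_neg hj.le, ← div_eq_mul_inv, le_div_iff₀ (by positivity), mul_comm]
  exact hC (mem_range_self j)

theorem tendsto_natCast_mul_natFloor (hα : 0 < α) {u : ℝ} (hu : 0 < u)
    (hlim : Tendsto (fun j : ℕ => (j : ℝ) ^ α * m j) atTop (𝓝 c)) :
    Tendsto (fun n : ℕ => (n : ℝ) * m ⌊u * (n : ℝ) ^ (1 / α)⌋₊) atTop (𝓝 (c * u ^ (-α))) := by
  have hs : Tendsto (fun n : ℕ => u * (n : ℝ) ^ (1 / α)) atTop atTop :=
    ((tendsto_rpow_atTop (by positivity)).comp tendsto_natCast_atTop_atTop).const_mul_atTop hu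
  have h := tendsto_rpow_mul_of_div_tendsto_one hlim (tendsto_nat_floor_atTop.comp hs)
    (tendsto_nat_floor_div_atTop.comp hs)
  refine (h.mul_const (u ^ (-α))).congr fun n => ?_
  rw [Function.comp_apply, mul_rpow_one_div_rpow hu.le n.cast_nonneg hα.ne', Real.rpow_neg hu.le]
  field_simp

theorem tendsto_one_sub_one_sub_pow_natFloor (hα : 0 < α) {u : ℝ} (hu : 0 < u)
    (hlim : Tendsto (fun j : ℕ => (j : ℝ) ^ α * m j) atTop (𝓝 c)) :
    Tendsto (fun n : ℕ => 1 - (1 - m ⌊u * (n : ℝ) ^ (1 / α)⌋₊) ^ n) atTop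
      (𝓝 (1 - Real.exp (-c * u ^ (-α)))) := by
  have h := Real.tendsto_one_add_pow_exp_of_tendsto
    (g := fun n => -m ⌊u * (n : ℝ) ^ (1 / α)⌋₊) (t := -(c * u ^ (-α)))
    (by simpa using (tendsto_natCast_mul_natFloor hα hu hlim).neg)
  simpa [sub_eq_add_neg] using tendsto_const_nhds.sub h

theorem abs_one_sub_one_sub_pow_natFloor_le (hα : 0 < α) (hm : ∀ j, m j ∈ Icc (0 : ℝ) 1)
    {C : ℝ} (hC : ∀ j : ℕ, m j ≤ C * ((j : ℝ) + 1) ^ (-α)) (n : ℕ) {u : ℝ} (hu : 0 < u) :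
    |1 - (1 - m ⌊u * (n : ℝ) ^ (1 / α)⌋₊) ^ n| ≤ min 1 (C * u ^ (-α)) := by
  set j := ⌊u * (n : ℝ) ^ (1 / α)⌋₊
  obtain ⟨hnonneg, hle_one⟩ := one_sub_one_sub_pow_mem_Icc (hm j) n
  rw [abs_of_nonneg hnonneg]
  have hC0 : 0 ≤ C := by simpa using (hm 0).1.trans (hC 0)
  rcases n.eq_zero_or_pos with rfl | hn
  · simp only [pow_zero, sub_self, le_min_iff]
    exact ⟨zero_le_one, by positivity⟩
  have hn0 : (0 : ℝ) < n := by exact_mod_cast hn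
  have hs : 0 < u * (n : ℝ) ^ (1 / α) := by positivity
  have hdecay : ((j : ℝ) + 1) ^ (-α) ≤ u ^ (-α) * (n : ℝ)⁻¹ := by
    calc ((j : ℝ) + 1) ^ (-α) ≤ (u * (n : ℝ) ^ (1 / α)) ^ (-α) :=
          Real.rpow_le_rpow_of_nonpos hs (Nat.lt_floor_add_one _).le (by linarith)
      _ = u ^ (-α) * (n : ℝ)⁻¹ := by
          rw [Real.rpow_neg hs.le, mul_rpow_one_div_rpow hu.le hn0.le hα.ne', mul_inv,
            Real.rpow_neg hu.le]
  refine le_min hle_one ?_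
  calc 1 - (1 - m j) ^ n ≤ n * m j := one_sub_one_sub_pow_le_mul (by linarith [(hm j).2]) n
    _ ≤ n * (C * (u ^ (-α) * (n : ℝ)⁻¹)) := by
        gcongr
        exact (hC j).trans (mul_le_mul_of_nonneg_left hdecay hC0)
    _ = C * u ^ (-α) := by field_simp

theorem summable_of_le_mul_add_one_rpow_neg (hα : 1 < α) (hm : ∀ j, 0 ≤ m j) {C : ℝ}
    (hC : ∀ j : ℕ, m j ≤ C * ((j : ℝ) + 1) ^ (-α)) : Summable m := by
  have hsum : Summable fun j : ℕ => ((j : ℝ) + 1) ^ (-α) := by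
    simpa [Real.rpow_neg, abs_of_nonneg, add_nonneg] using
      (Real.summable_one_div_nat_add_rpow 1 α).2 hα
  exact .of_nonneg_of_le hm hC (hsum.mul_left C)

theorem tendsto_integral_Ioi_one_sub_one_sub_pow_natFloor (hα : 1 < α)
    (hm : ∀ j, m j ∈ Icc (0 : ℝ) 1)
    (hlim : Tendsto (fun j : ℕ => (j : ℝ) ^ α * m j) atTop (𝓝 c)) :
    Tendsto (fun n : ℕ => ∫ u in Ioi (0 : ℝ), (1 - (1 - m ⌊u * (n : ℝ) ^ (1 / α)⌋₊) ^ n))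
      atTop (𝓝 (∫ u in Ioi (0 : ℝ), (1 - Real.exp (-c * u ^ (-α))))) := by
  have hα0 : 0 < α := by linarith
  obtain ⟨C, hC⟩ := exists_le_mul_add_one_rpow_neg hlim
  have hC0 : 0 ≤ C := by simpa using (hm 0).1.trans (hC 0)
  refine tendsto_integral_of_dominated_convergence _
    (fun n => (by measurability : Measurable _).aestronglyMeasurable)
    (integrableOn_min_one_mul_rpow_neg hα hC0) (fun n => ?_) ?_
  · exact (ae_restrict_iff' measurableSet_Ioi).2 (.of_forall fun u hu =>
      abs_one_sub_one_sub_pow_natFloor_le hα0 hm hC n hu)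
  · exact (ae_restrict_iff' measurableSet_Ioi).2 (.of_forall fun u hu =>
      tendsto_one_sub_one_sub_pow_natFloor hα0 hu hlim)

end DecayRate

theorem one_sub_exp_neg_le_min (x : ℝ) : 1 - Real.exp (-x) ≤ min 1 x :=
  le_min (by linarith [Real.exp_nonneg (-x)]) (by linarith [Real.add_one_le_exp (-x)])

theorem integral_Ioi_one_sub_exp_neg_mul_rpow_neg_pos {α c : ℝ} (hα : 1 < α) (hc : 0 < c) :
    0 < ∫ u in Ioi (0 : ℝ), (1 - Real.exp (-c * u ^ (-α))) := by
  have hpos : ∀ u ∈ Ioi (0 : ℝ), 0 < 1 - Real.exp (-c * u ^ (-α)) := fun u (hu : 0 < u) => by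
    have : 0 < c * u ^ (-α) := by positivity
    rw [sub_pos, Real.exp_lt_one_iff]
    linarith
  have hint : IntegrableOn (fun u : ℝ => 1 - Real.exp (-c * u ^ (-α))) (Ioi 0) := by
    refine (integrableOn_min_one_mul_rpow_neg hα hc.le).mono' (by fun_prop) ?_
    refine (ae_restrict_iff' measurableSet_Ioi).2 (.of_forall fun u (hu : 0 < u) => ?_)
    rw [Real.norm_of_nonneg (hpos u hu).le, neg_mul]
    exact one_sub_exp_neg_le_min _
  rw [setIntegral_pos_iff_support_of_nonneg_ae
    ((ae_restrict_iff' measurableSet_Ioi).2 (.of_forall fun u hu => (hpos u hu).le)) hint]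
  have hsupp :
      Ioi (0 : ℝ) ⊆ Function.support (fun u : ℝ => 1 - Real.exp (-c * u ^ (-α))) ∩ Ioi 0 :=
    fun u hu => ⟨(hpos u hu).ne', hu⟩
  exact (by simp : (0 : ENNReal) < volume (Ioi (0 : ℝ))).trans_le (measure_mono hsupp)

theorem stmt_17_general (α c : ℝ) (hα : 1 < α) (hc : 0 < c)
    (m : ℕ → ℝ) (hm : ∀ j, m j ∈ Set.Ioo (0 : ℝ) 1)
    (hlim : Tendsto (fun j : ℕ => (j : ℝ) ^ α * m j) atTop (nhds c)) :
    Tendsto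
      (fun n : ℕ => (n : ℝ) ^ (-(1 / α)) * ∑' j : ℕ, (1 - (1 - m j) ^ n))
      atTop
      (nhds (∫ u in Set.Ioi (0 : ℝ), (1 - Real.exp (-c * u ^ (-α))))) ∧
    ∃ C₁ C₂ : ℝ, 0 < C₁ ∧ 0 < C₂ ∧ ∀ᶠ n : ℕ in atTop,
      C₁ * (n : ℝ) ^ (1 / α) ≤ (∑' j : ℕ, (1 - (1 - m j) ^ n)) ∧
      (∑' j : ℕ, (1 - (1 - m j) ^ n)) ≤ C₂ * (n : ℝ) ^ (1 / α) := by
  have hm_Icc : ∀ j, m j ∈ Icc (0 : ℝ) 1 := fun j => Ioo_subset_Icc_self (hm j)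
  obtain ⟨C, hC⟩ := exists_le_mul_add_one_rpow_neg hlim
  have hsum : Summable m := summable_of_le_mul_add_one_rpow_neg hα (fun j => (hm j).1.le) hC
  have hrescale : Tendsto (fun n : ℕ => (n : ℝ) ^ (-(1 / α)) * ∑' j : ℕ, (1 - (1 - m j) ^ n))
      atTop (𝓝 (∫ u in Ioi (0 : ℝ), (1 - Real.exp (-c * u ^ (-α))))) := by
    refine (tendsto_integral_Ioi_one_sub_one_sub_pow_natFloor hα hm_Icc hlim).congr' ?_
    filter_upwards [eventually_gt_atTop 0] with n hn
    rw [integral_Ioi_natFloor_mul (summable_norm_one_sub_one_sub_pow hm_Icc hsum n) (by positivity),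
      Real.rpow_neg n.cast_nonneg, smul_eq_mul]
  refine ⟨hrescale, exists_pos_mul_le_and_le_mul_of_tendsto_inv_mul ?_
    (integral_Ioi_one_sub_exp_neg_mul_rpow_neg_pos hα hc) ?_⟩
  · filter_upwards [eventually_gt_atTop 0] with n hn
    positivity
  · simpa only [Real.rpow_neg (Nat.cast_nonneg _)] using hrescale

/-- If `(m_j)` is nonincreasing with `0 < m_j < 1` and `j^α m_j → c` for `α > 1`,
then `n^{-1/α} ∑_j (1 - (1 - m_j)^n) → ∫_0^∞ (1 - exp(-c u^{-α})) du`;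
in particular `∑_j (1 - (1 - m_j)^n) = Θ(n^{1/α})`. -/
theorem stmt_17 (α c : ℝ) (hα : 1 < α) (hc : 0 < c)
    (m : ℕ → ℝ) (hmono : Antitone m) (hm : ∀ j, m j ∈ Set.Ioo (0 : ℝ) 1)
    (hlim : Tendsto (fun j : ℕ => (j : ℝ) ^ α * m j) atTop (nhds c)) :
    Tendsto
      (fun n : ℕ => (n : ℝ) ^ (-(1 / α)) * ∑' j : ℕ, (1 - (1 - m j) ^ n))
      atTop
      (nhds (∫ u in Set.Ioi (0 : ℝ), (1 - Real.exp (-c * u ^ (-α))))) ∧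
    ∃ C₁ C₂ : ℝ, 0 < C₁ ∧ 0 < C₂ ∧ ∀ᶠ n : ℕ in atTop,
      C₁ * (n : ℝ) ^ (1 / α) ≤ (∑' j : ℕ, (1 - (1 - m j) ^ n)) ∧
      (∑' j : ℕ, (1 - (1 - m j) ^ n)) ≤ C₂ * (n : ℝ) ^ (1 / α) :=
  stmt_17_general α c hα hc m hm hlim
end

section
/- Let c > 0 and δ > 0, and let p_1, …, p_n be i.i.d. random variables with values in [0,1] whose common law has a density f with respect to Lebesgue measure satisfying f(1−x) = c + O(x^{δ}) as x → 0+. Set T_n = ∑_{k=1}^∞ (1 − ∏_{i=1}^n (1 − p_i^k)). Then the sequence of random variables T_n/n is stochastically bounded: for every ε > 0 there exists y > 0 such that, for all sufficiently large n, P(T_n/n > y) < ε. -/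
/-!
Each term of `T_n` is at most `1` and, by the union bound, at most `∑ᵢ pᵢ^(k+1)`; splitting the
series at `k = n` gives `T_n ≤ n + ∑ᵢ pᵢⁿ / (1 - pᵢ)`. Near `1` the density is bounded, so
`P(p > 1 - s) ≤ C s` for all `s ≥ 0`. With probability at least `1 - C/B` every `pᵢ` is at most
`1 - 1/(Bn)`, and then `pᵢⁿ / (1 - pᵢ)` is dominated by a function of `pᵢ` whose expectation is
`O(1)` uniformly in `n`, so Markov's inequality bounds `P(T_n > y n)` by `O(1/y)`.
-/

open MeasureTheory ProbabilityTheory Filter Asymptotics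
open Set Real
open scoped ENNReal Topology

local notation "κ" => ∑' j : ℕ, (j + 1 : ℝ) * exp (-j)

theorem one_sub_prod_one_sub_le_sum {ι R : Type*} [LinearOrder ι] [CommRing R] [PartialOrder R]
    [IsOrderedRing R] (s : Finset ι) (a : ι → R) (h0 : ∀ i ∈ s, 0 ≤ a i)
    (h1 : ∀ i ∈ s, a i ≤ 1) :
    1 - ∏ i ∈ s, (1 - a i) ≤ ∑ i ∈ s, a i := by
  rw [Finset.prod_one_sub_ordered, sub_sub_cancel]
  refine Finset.sum_le_sum fun i hi => mul_le_of_le_one_right (h0 i hi) ?_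
  refine Finset.prod_le_one (fun j hj => ?_) (fun j hj => ?_) <;>
    have hj := (Finset.mem_filter.1 hj).1
  · exact sub_nonneg.2 (h1 j hj)
  · exact sub_le_self _ (h0 j hj)

theorem tsum_one_sub_prod_one_sub_pow_le {ι : Type*} [LinearOrder ι] (s : Finset ι) (q : ι → ℝ)
    (h0 : ∀ i ∈ s, 0 ≤ q i) (h1 : ∀ i ∈ s, q i < 1) (K : ℕ) :
    ∑' k : ℕ, (1 - ∏ i ∈ s, (1 - q i ^ (k + 1))) ≤ K + ∑ i ∈ s, q i ^ K / (1 - q i) := by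
  set t : ℕ → ℝ := fun k => 1 - ∏ i ∈ s, (1 - q i ^ (k + 1))
  have hpow0 : ∀ k, ∀ i ∈ s, 0 ≤ q i ^ k := fun k i hi => pow_nonneg (h0 i hi) k
  have hpow1 : ∀ k, ∀ i ∈ s, q i ^ k ≤ 1 := fun k i hi => pow_le_one₀ (h0 i hi) (h1 i hi).le
  have ht0 : ∀ k, 0 ≤ t k := fun k =>
    sub_nonneg.2 <| Finset.prod_le_one (fun i hi => sub_nonneg.2 (hpow1 _ i hi))
      fun i hi => sub_le_self _ (hpow0 _ i hi)
  have ht1 : ∀ k, t k ≤ 1 := fun k =>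
    sub_le_self _ <| Finset.prod_nonneg fun i hi => sub_nonneg.2 (hpow1 _ i hi)
  have hgeom : HasSum (fun k => ∑ i ∈ s, q i ^ K * q i ^ k) (∑ i ∈ s, q i ^ K / (1 - q i)) :=
    hasSum_sum fun i hi => by
      simpa [div_eq_mul_inv] using (hasSum_geometric_of_lt_one (h0 i hi) (h1 i hi)).mul_left _
  have htail : ∀ k, t (k + K) ≤ ∑ i ∈ s, q i ^ K * q i ^ k := fun k =>
    (one_sub_prod_one_sub_le_sum s _ (hpow0 _) (hpow1 _)).trans <|
      Finset.sum_le_sum fun i hi => by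
        rw [← pow_add, add_comm K]
        exact pow_le_pow_of_le_one (h0 i hi) (h1 i hi).le (by omega)
  have hts : Summable t :=
    (summable_nat_add_iff K).1 <| hgeom.summable.of_nonneg_of_le (fun k => ht0 _) htail
  rw [← hts.sum_add_tsum_nat_add K]
  gcongr
  · simpa using Finset.sum_le_card_nsmul (Finset.range K) t 1 fun k _ => ht1 k
  · exact hasSum_le htail ((summable_nat_add_iff K).2 hts).hasSum hgeom

/-- With `v = n (1 - q)` one has `qⁿ / (1 - q) ≤ n e^{-v} / v`, which is at most `n B` on the
slice `v < 1` (given `v ≥ 1/B`) and at most `n e^{-j}` on the slice `v < j + 1`, `j = ⌊v⌋ ≥ 1`. -/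
noncomputable def geomTailMajorant (n : ℕ) (B q : ℝ) : ℝ≥0∞ :=
  ENNReal.ofReal n * (ENNReal.ofReal B * (Ioi (1 - 1 / (n : ℝ))).indicator 1 q +
    ∑' j : ℕ, ENNReal.ofReal (exp (-j)) * (Ioi (1 - (j + 1) / (n : ℝ))).indicator 1 q)

theorem measurable_geomTailMajorant (n : ℕ) (B : ℝ) : Measurable (geomTailMajorant n B) := by
  unfold geomTailMajorant
  refine measurable_const.mul (Measurable.add ?_ (Measurable.tsum fun j => ?_)) <;>
    exact measurable_const.mul (measurable_one.indicator measurableSet_Ioi)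

theorem ofReal_pow_div_one_sub_le_geomTailMajorant {n : ℕ} (hn : n ≠ 0) {B q : ℝ} (hB : 0 < B)
    (hq0 : 0 ≤ q) (hq : q ≤ 1 - 1 / (B * n)) :
    ENNReal.ofReal (q ^ n / (1 - q)) ≤ geomTailMajorant n B q := by
  have hn' : (0 : ℝ) < n := by positivity
  set v := n * (1 - q) with hv
  have hvB : 1 / B ≤ v := by
    rw [hv, ← div_le_iff₀' hn', div_div]; linarith
  have hv0 : 0 < v := lt_of_lt_of_le (by positivity) hvB
  have hq_eq : q = 1 - v / n := by rw [hv]; field_simp; ring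
  have hpow : q ^ n ≤ exp (-v) := by
    rw [hq_eq]; exact one_sub_div_pow_le_exp_neg (by rw [hv]; nlinarith)
  have hinv : 1 / (1 - q) = n / v := by rw [hv]; field_simp
  have hratio : q ^ n / (1 - q) ≤ n * (exp (-v) / v) := by
    rw [div_eq_mul_one_div, hinv]
    calc q ^ n * (n / v) ≤ exp (-v) * (n / v) := by gcongr
      _ = n * (exp (-v) / v) := by ring
  unfold geomTailMajorant
  rcases lt_or_ge v 1 with hv1 | hv1
  · have hmem : q ∈ Ioi (1 - 1 / (n : ℝ)) := by
      rw [mem_Ioi, hq_eq]; gcongr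
    have hbound : q ^ n / (1 - q) ≤ n * B := by
      refine hratio.trans (mul_le_mul_of_nonneg_left ?_ hn'.le)
      calc exp (-v) / v ≤ 1 / v := by gcongr; exact exp_le_one_iff.2 (by linarith)
        _ ≤ B := by rw [div_le_iff₀ hv0]; rwa [div_le_iff₀ hB, mul_comm] at hvB
    calc ENNReal.ofReal (q ^ n / (1 - q)) ≤ ENNReal.ofReal n * (ENNReal.ofReal B * 1) := by
          rw [mul_one, ← ENNReal.ofReal_mul hn'.le]; exact ENNReal.ofReal_le_ofReal hbound
      _ ≤ _ := by rw [indicator_of_mem hmem]; gcongr; exact le_self_add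
  · set j := ⌊v⌋₊
    have hmem : q ∈ Ioi (1 - (j + 1) / (n : ℝ)) := by
      rw [mem_Ioi, hq_eq]; gcongr; exact Nat.lt_floor_add_one v
    have hbound : q ^ n / (1 - q) ≤ n * exp (-j) := by
      refine hratio.trans (mul_le_mul_of_nonneg_left ?_ hn'.le)
      calc exp (-v) / v ≤ exp (-v) := div_le_self (exp_nonneg _) hv1
        _ ≤ exp (-j) := exp_le_exp.2 (neg_le_neg (Nat.floor_le hv0.le))
    calc ENNReal.ofReal (q ^ n / (1 - q))
        ≤ ENNReal.ofReal n *
            (ENNReal.ofReal (exp (-j)) * (Ioi (1 - (j + 1) / (n : ℝ))).indicator 1 q) := by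
          rw [indicator_of_mem hmem, Pi.one_apply, mul_one, ← ENNReal.ofReal_mul hn'.le]
          exact ENNReal.ofReal_le_ofReal hbound
      _ ≤ _ := by gcongr; exact (ENNReal.le_tsum j).trans le_add_self

theorem summable_succ_mul_exp_neg : Summable fun j : ℕ => (j + 1 : ℝ) * exp (-j) := by
  simpa [add_mul] using (summable_pow_mul_exp_neg_nat_mul 1 one_pos).add
    (summable_pow_mul_exp_neg_nat_mul 0 one_pos)

theorem lintegral_geomTailMajorant_le {μ : Measure ℝ} {C : ℝ} (hC : 0 ≤ C)
    (htail : ∀ s, 0 ≤ s → μ (Ioi (1 - s)) ≤ ENNReal.ofReal (C * s))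
    {n : ℕ} (hn : n ≠ 0) {B : ℝ} (hB : 0 ≤ B) :
    ∫⁻ q, geomTailMajorant n B q ∂μ ≤ ENNReal.ofReal (C * (B + κ)) := by
  have hn' : (0 : ℝ) < n := by positivity
  have hind : ∀ s : ℝ, Measurable ((Ioi s).indicator (1 : ℝ → ℝ≥0∞)) := fun s =>
    measurable_one.indicator measurableSet_Ioi
  unfold geomTailMajorant
  rw [lintegral_const_mul' _ _ ENNReal.ofReal_ne_top,
    lintegral_add_left ((hind _).const_mul _), lintegral_const_mul _ (hind _),
    lintegral_tsum fun j => ((hind _).const_mul _).aemeasurable]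
  simp_rw [lintegral_const_mul _ (hind _), lintegral_indicator_one measurableSet_Ioi]
  calc ENNReal.ofReal n * (ENNReal.ofReal B * μ (Ioi (1 - 1 / n)) +
        ∑' j : ℕ, ENNReal.ofReal (exp (-j)) * μ (Ioi (1 - (j + 1) / n)))
      ≤ ENNReal.ofReal n * (ENNReal.ofReal B * ENNReal.ofReal (C * (1 / n)) +
        ∑' j : ℕ, ENNReal.ofReal (exp (-j)) * ENNReal.ofReal (C * ((j + 1) / n))) := by
        gcongr with j
        · exact htail _ (by positivity)
        · exact htail _ (by positivity)
    _ = _ := by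
        have hsum : HasSum (fun j : ℕ => exp (-j) * (C * ((j + 1) / n))) (C / n * κ) := by
          rw [show (fun j : ℕ => exp (-j) * (C * ((j + 1) / n))) =
              fun j : ℕ => C / n * ((j + 1) * exp (-j)) from funext fun j => by ring]
          exact summable_succ_mul_exp_neg.hasSum.mul_left _
        simp_rw [← ENNReal.ofReal_mul (exp_nonneg _)]
        rw [← ENNReal.ofReal_tsum_of_nonneg (fun j => by positivity) hsum.summable, hsum.tsum_eq,
          ← ENNReal.ofReal_mul hB, ← ENNReal.ofReal_add (by positivity) (by positivity),
          ← ENNReal.ofReal_mul hn'.le]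
        congr 1
        field_simp

theorem ofReal_tsum_le_add_sum_geomTailMajorant {ι : Type*} [LinearOrder ι] (s : Finset ι)
    (q : ι → ℝ) {n : ℕ} (hn : n ≠ 0) {B : ℝ} (hB : 0 < B) (h0 : ∀ i ∈ s, 0 ≤ q i)
    (h1 : ∀ i ∈ s, q i ≤ 1 - 1 / (B * n)) :
    ENNReal.ofReal (∑' k : ℕ, (1 - ∏ i ∈ s, (1 - q i ^ (k + 1)))) ≤
      n + ∑ i ∈ s, geomTailMajorant n B (q i) := by
  have hlt : ∀ i ∈ s, q i < 1 := fun i hi => (h1 i hi).trans_lt (sub_lt_self _ (by positivity))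
  have hterm : ∀ i ∈ s, 0 ≤ q i ^ n / (1 - q i) := fun i hi =>
    div_nonneg (pow_nonneg (h0 i hi) n) (sub_nonneg.2 (hlt i hi).le)
  calc ENNReal.ofReal (∑' k : ℕ, (1 - ∏ i ∈ s, (1 - q i ^ (k + 1))))
      ≤ ENNReal.ofReal (n + ∑ i ∈ s, q i ^ n / (1 - q i)) :=
        ENNReal.ofReal_le_ofReal (tsum_one_sub_prod_one_sub_pow_le s q h0 hlt n)
    _ = n + ∑ i ∈ s, ENNReal.ofReal (q i ^ n / (1 - q i)) := by
        rw [ENNReal.ofReal_add n.cast_nonneg (Finset.sum_nonneg hterm), ENNReal.ofReal_natCast,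
          ENNReal.ofReal_sum_of_nonneg hterm]
    _ ≤ n + ∑ i ∈ s, geomTailMajorant n B (q i) := by
        gcongr with i hi
        exact ofReal_pow_div_one_sub_le_geomTailMajorant hn hB (h0 i hi) (h1 i hi)

theorem measure_biUnion_preimage_Ioi_one_sub_le {Ω ι : Type*} [MeasurableSpace Ω]
    {P : Measure Ω} {μ : Measure ℝ} {p : ι → Ω → ℝ} {C : ℝ} (hmeas : ∀ i, Measurable (p i))
    (hlaw : ∀ i, P.map (p i) = μ)
    (htail : ∀ s, 0 ≤ s → μ (Ioi (1 - s)) ≤ ENNReal.ofReal (C * s)) (t : Finset ι) {s : ℝ}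
    (hs : 0 ≤ s) :
    P (⋃ i ∈ t, p i ⁻¹' Ioi (1 - s)) ≤ t.card * ENNReal.ofReal (C * s) := by
  calc _ ≤ ∑ i ∈ t, P (p i ⁻¹' Ioi (1 - s)) := measure_biUnion_finset_le _ _
    _ ≤ ∑ i ∈ t, ENNReal.ofReal (C * s) := by
        gcongr with i
        rw [← Measure.map_apply (hmeas i) measurableSet_Ioi, hlaw i]
        exact htail s hs
    _ = t.card * ENNReal.ofReal (C * s) := by rw [Finset.sum_const, nsmul_eq_mul]

theorem lintegral_sum_geomTailMajorant_le {Ω ι : Type*} [MeasurableSpace Ω] {P : Measure Ω}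
    {μ : Measure ℝ} {p : ι → Ω → ℝ} {C : ℝ} (hmeas : ∀ i, Measurable (p i))
    (hlaw : ∀ i, P.map (p i) = μ) (hC : 0 ≤ C)
    (htail : ∀ s, 0 ≤ s → μ (Ioi (1 - s)) ≤ ENNReal.ofReal (C * s)) (t : Finset ι) {n : ℕ}
    (hn : n ≠ 0) {B : ℝ} (hB : 0 ≤ B) :
    ∫⁻ ω, ∑ i ∈ t, geomTailMajorant n B (p i ω) ∂P ≤
      t.card * ENNReal.ofReal (C * (B + κ)) := by
  rw [lintegral_finsetSum (f := fun i ω => geomTailMajorant n B (p i ω)) _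
    fun i _ => (measurable_geomTailMajorant n B).comp (hmeas i)]
  calc _ = ∑ i ∈ t, ∫⁻ q, geomTailMajorant n B q ∂μ := by
        refine Finset.sum_congr rfl fun i _ => ?_
        rw [← hlaw i, lintegral_map (measurable_geomTailMajorant n B) (hmeas i)]
    _ ≤ ∑ i ∈ t, ENNReal.ofReal (C * (B + κ)) := by
        gcongr with i
        exact lintegral_geomTailMajorant_le hC htail hn hB
    _ = _ := by rw [Finset.sum_const, nsmul_eq_mul]

theorem measure_ofReal_le_add_sum_geomTailMajorant_le {Ω : Type*} [MeasurableSpace Ω]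
    {P : Measure Ω} [IsProbabilityMeasure P] {μ : Measure ℝ} {p : ℕ → Ω → ℝ}
    (hmeas : ∀ i, Measurable (p i)) (hlaw : ∀ i, P.map (p i) = μ) {C : ℝ} (hC : 0 ≤ C)
    (htail : ∀ s, 0 ≤ s → μ (Ioi (1 - s)) ≤ ENNReal.ofReal (C * s)) {n : ℕ} (hn : n ≠ 0)
    {B y : ℝ} (hB : 0 ≤ B) (hy : 0 < y) :
    P {ω | ENNReal.ofReal (y * n) ≤ n + ∑ i ∈ Finset.range n, geomTailMajorant n B (p i ω)} ≤
      ENNReal.ofReal ((1 + C * (B + κ)) / y) := by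
  have hκ : 0 ≤ κ := tsum_nonneg fun j => by positivity
  have hpos : 0 < y * n := by positivity
  have hS : Measurable fun ω => ∑ i ∈ Finset.range n, geomTailMajorant n B (p i ω) :=
    Finset.measurable_sum _ fun i _ => (measurable_geomTailMajorant n B).comp (hmeas i)
  calc _ ≤ (∫⁻ ω, n + ∑ i ∈ Finset.range n, geomTailMajorant n B (p i ω) ∂P) /
        ENNReal.ofReal (y * n) :=
        meas_ge_le_lintegral_div (measurable_const.add hS).aemeasurable
          (ENNReal.ofReal_pos.2 hpos).ne' ENNReal.ofReal_ne_top
    _ ≤ (n + n * ENNReal.ofReal (C * (B + κ))) / ENNReal.ofReal (y * n) := by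
        rw [lintegral_add_left measurable_const, lintegral_const, measure_univ, mul_one]
        gcongr
        simpa using lintegral_sum_geomTailMajorant_le hmeas hlaw hC htail (Finset.range n) hn hB
    _ = ENNReal.ofReal ((1 + C * (B + κ)) / y) := by
        rw [← ENNReal.ofReal_natCast, ← ENNReal.ofReal_mul n.cast_nonneg,
          ← ENNReal.ofReal_add n.cast_nonneg (by positivity), ← ENNReal.ofReal_div_of_pos hpos]
        congr 1
        field_simp

theorem measure_lt_tsum_div_le {Ω : Type*} [MeasurableSpace Ω] {P : Measure Ω}
    [IsProbabilityMeasure P] {μ : Measure ℝ} {p : ℕ → Ω → ℝ} (hmeas : ∀ i, Measurable (p i))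
    (hlaw : ∀ i, P.map (p i) = μ) (hp0 : ∀ i ω, 0 ≤ p i ω) {C : ℝ} (hC : 0 ≤ C)
    (htail : ∀ s, 0 ≤ s → μ (Ioi (1 - s)) ≤ ENNReal.ofReal (C * s)) {B y : ℝ} (hB : 0 < B)
    (hy : 0 < y) (n : ℕ) :
    P {ω | y < (∑' k : ℕ, (1 - ∏ i ∈ Finset.range n, (1 - p i ω ^ (k + 1)))) / n} ≤
      ENNReal.ofReal (C / B + (1 + C * (B + κ)) / y) := by
  rcases eq_or_ne n 0 with rfl | hn
  · simp [not_lt.2 hy.le]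
  have hn' : (0 : ℝ) < n := by positivity
  have hκ : 0 ≤ κ := tsum_nonneg fun j => by positivity
  have hsub : {ω | y < (∑' k : ℕ, (1 - ∏ i ∈ Finset.range n, (1 - p i ω ^ (k + 1)))) / n} ⊆
      (⋃ i ∈ Finset.range n, p i ⁻¹' Ioi (1 - 1 / (B * n))) ∪
        {ω | ENNReal.ofReal (y * n) ≤ n + ∑ i ∈ Finset.range n, geomTailMajorant n B (p i ω)} := by
    intro ω hω
    rw [mem_union, or_iff_not_imp_left]
    intro hgood
    simp only [mem_iUnion, mem_preimage, mem_Ioi, not_exists, not_lt] at hgood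
    exact (ENNReal.ofReal_le_ofReal ((lt_div_iff₀ hn').1 hω).le).trans
      (ofReal_tsum_le_add_sum_geomTailMajorant _ (p · ω) hn hB (fun i _ => hp0 i ω) hgood)
  have hnear : P (⋃ i ∈ Finset.range n, p i ⁻¹' Ioi (1 - 1 / (B * n))) ≤
      ENNReal.ofReal (C / B) := by
    refine (measure_biUnion_preimage_Ioi_one_sub_le hmeas hlaw htail _ (by positivity)).trans ?_
    rw [Finset.card_range, ← ENNReal.ofReal_natCast, ← ENNReal.ofReal_mul n.cast_nonneg]
    exact ENNReal.ofReal_le_ofReal (by field_simp; rfl)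
  have hmarkov := measure_ofReal_le_add_sum_geomTailMajorant_le hmeas hlaw hC htail hn hB.le hy
  calc _ ≤ _ := measure_mono hsub
    _ ≤ _ := measure_union_le _ _
    _ ≤ ENNReal.ofReal (C / B) + ENNReal.ofReal ((1 + C * (B + κ)) / y) :=
        add_le_add hnear hmarkov
    _ = _ := (ENNReal.ofReal_add (by positivity) (by positivity)).symm

theorem exists_forall_measure_lt_tsum_div_lt {Ω : Type*} [MeasurableSpace Ω] {P : Measure Ω}
    [IsProbabilityMeasure P] {μ : Measure ℝ} {p : ℕ → Ω → ℝ} (hmeas : ∀ i, Measurable (p i))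
    (hlaw : ∀ i, P.map (p i) = μ) (hp0 : ∀ i ω, 0 ≤ p i ω) {C : ℝ} (hC : 0 ≤ C)
    (htail : ∀ s, 0 ≤ s → μ (Ioi (1 - s)) ≤ ENNReal.ofReal (C * s)) {ε : ℝ} (hε : 0 < ε) :
    ∃ y, 0 < y ∧ ∀ n : ℕ,
      P {ω | y < (∑' k : ℕ, (1 - ∏ i ∈ Finset.range n, (1 - p i ω ^ (k + 1)))) / n} <
        ENNReal.ofReal ε := by
  have hκ : 0 ≤ κ := tsum_nonneg fun j => by positivity
  set B := 4 * C / ε + 1 with hBdef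
  have hB : 0 < B := by rw [hBdef]; positivity
  have hnear : C / B ≤ ε / 4 := by
    rw [div_le_iff₀ hB, hBdef]
    field_simp
    linarith
  set y := 4 * (1 + C * (B + κ)) / ε with hydef
  have hy : 0 < y := by rw [hydef]; positivity
  have hmarkov : (1 + C * (B + κ)) / y = ε / 4 := by
    rw [hydef]
    field_simp
  refine ⟨y, hy, fun n => ?_⟩
  calc _ ≤ ENNReal.ofReal (C / B + (1 + C * (B + κ)) / y) :=
        measure_lt_tsum_div_le hmeas hlaw hp0 hC htail hB hy n
    _ < ENNReal.ofReal ε := by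
        rw [ENNReal.ofReal_lt_ofReal_iff hε]
        linarith

theorem tendsto_of_isBigO_rpow {g : ℝ → ℝ} {c δ : ℝ} (hδ : 0 < δ)
    (h : (fun x => g x - c) =O[𝓝[>] 0] fun x => x ^ δ) : Tendsto g (𝓝[>] 0) (𝓝 c) := by
  have hrpow : Tendsto (fun x : ℝ => x ^ δ) (𝓝[>] 0) (𝓝 0) := by
    simpa [zero_rpow hδ.ne'] using
      (continuousAt_rpow_const 0 δ (Or.inr hδ.le)).tendsto.mono_left nhdsWithin_le_nhds
  simpa using (h.trans_tendsto hrpow).add_const c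

theorem exists_measure_Ioi_one_sub_le {μ : Measure ℝ} [IsProbabilityMeasure μ] {f : ℝ → ℝ}
    (hf : μ = volume.withDensity fun x => ENNReal.ofReal (f x)) (h1 : μ (Ioi 1) = 0) {M : ℝ}
    (hM : ∀ᶠ x in 𝓝[>] 0, f (1 - x) ≤ M) :
    ∃ C, 0 ≤ C ∧ ∀ s, 0 ≤ s → μ (Ioi (1 - s)) ≤ ENNReal.ofReal (C * s) := by
  obtain ⟨t, ht, hMt⟩ := mem_nhdsGT_iff_exists_Ioo_subset.1 hM
  have ht : 0 < t := ht
  refine ⟨max M (1 / t), le_max_of_le_right (by positivity), fun s hs => ?_⟩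
  rcases le_or_gt t s with hts | hst
  · calc μ (Ioi (1 - s)) ≤ 1 := prob_le_one
      _ = ENNReal.ofReal (1 / t * t) := by rw [one_div_mul_cancel ht.ne', ENNReal.ofReal_one]
      _ ≤ ENNReal.ofReal (max M (1 / t) * s) := by gcongr; exact le_max_right _ _
  · have hbound :
        ∀ x ∈ Ioo (1 - s) 1, ENNReal.ofReal (f x) ≤ ENNReal.ofReal (max M (1 / t)) := by
      intro x hx
      have hx' : 1 - x ∈ Ioo 0 t := ⟨by linarith [hx.2], by linarith [hx.1]⟩
      have : f (1 - (1 - x)) ≤ M := hMt hx'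
      rw [sub_sub_cancel] at this
      exact ENNReal.ofReal_le_ofReal (this.trans (le_max_left _ _))
    calc μ (Ioi (1 - s)) ≤ μ (Ioc (1 - s) 1) + μ (Ioi 1) := by
          rw [← Ioc_union_Ioi_eq_Ioi (show 1 - s ≤ 1 by linarith)]; exact measure_union_le _ _
      _ = ∫⁻ x in Ioo (1 - s) 1, ENNReal.ofReal (f x) := by
          rw [h1, add_zero, hf, withDensity_apply _ measurableSet_Ioc,
            setLIntegral_congr Ioo_ae_eq_Ioc]
      _ ≤ ∫⁻ _ in Ioo (1 - s) 1, ENNReal.ofReal (max M (1 / t)) :=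
          setLIntegral_mono measurable_const hbound
      _ = ENNReal.ofReal (max M (1 / t) * s) := by
          rw [setLIntegral_const, Real.volume_Ioo, sub_sub_cancel,
            ENNReal.ofReal_mul (le_max_of_le_right (by positivity))]

theorem stmt_18_general {Ω : Type*} [MeasureSpace Ω] [IsProbabilityMeasure (ℙ : Measure Ω)]
    (c δ : ℝ) (hδ : 0 < δ)
    (p : ℕ → Ω → ℝ) (hmeas : ∀ i, Measurable (p i))
    (hident : ∀ i, Measure.map (p i) ℙ = Measure.map (p 0) ℙ)
    (hrange : ∀ i ω, p i ω ∈ Set.Icc (0 : ℝ) 1)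
    (f : ℝ → ℝ)
    (hf : Measure.map (p 0) ℙ
      = MeasureTheory.volume.withDensity (fun x => ENNReal.ofReal (f x)))
    (hasymp : (fun x => f (1 - x) - c)
      =O[nhdsWithin 0 (Set.Ioi (0 : ℝ))] (fun x => x ^ δ))
    (T : ℕ → Ω → ℝ)
    (hT : ∀ n ω, T n ω = ∑' k : ℕ,
      (1 - ∏ i ∈ Finset.range n, (1 - p i ω ^ (k + 1)))) :
    ∀ ε > 0, ∃ y : ℝ, 0 < y ∧ ∀ᶠ n : ℕ in atTop,
      ℙ {ω | y < T n ω / n} < ENNReal.ofReal ε := by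
  intro ε hε
  have : IsProbabilityMeasure (Measure.map (p 0) ℙ) :=
    Measure.isProbabilityMeasure_map (hmeas 0).aemeasurable
  have hμ1 : Measure.map (p 0) ℙ (Ioi 1) = 0 := by
    rw [Measure.map_apply (hmeas 0) measurableSet_Ioi]
    exact measure_mono_null (fun ω hω => ((hrange 0 ω).2.not_gt hω).elim) measure_empty
  obtain ⟨C, hC, htail⟩ := exists_measure_Ioi_one_sub_le hf hμ1
    ((tendsto_of_isBigO_rpow (g := fun x => f (1 - x)) hδ hasymp).eventually
      (eventually_le_nhds (lt_add_one c)))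
  obtain ⟨y, hy, hbound⟩ := exists_forall_measure_lt_tsum_div_lt hmeas hident
    (fun i ω => (hrange i ω).1) hC htail hε
  refine ⟨y, hy, Eventually.of_forall fun n => ?_⟩
  simpa only [hT] using hbound n

/-- Tightness of `T_n/n` when the i.i.d. overlaps have density `f` with
`f(1-x) = c + O(x^δ)` as `x → 0+`: for every `ε > 0` there is `y > 0` with
`P(T_n/n > y) < ε` for all large `n`. -/
theorem stmt_18 {Ω : Type*} [MeasureSpace Ω] [IsProbabilityMeasure (ℙ : Measure Ω)]
    (c δ : ℝ) (hc : 0 < c) (hδ : 0 < δ)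
    (p : ℕ → Ω → ℝ) (hmeas : ∀ i, Measurable (p i))
    (hindep : iIndepFun p ℙ)
    (hident : ∀ i, Measure.map (p i) ℙ = Measure.map (p 0) ℙ)
    (hrange : ∀ i ω, p i ω ∈ Set.Icc (0 : ℝ) 1)
    (f : ℝ → ℝ)
    (hf : Measure.map (p 0) ℙ
      = MeasureTheory.volume.withDensity (fun x => ENNReal.ofReal (f x)))
    (hasymp : (fun x => f (1 - x) - c)
      =O[nhdsWithin 0 (Set.Ioi (0 : ℝ))] (fun x => x ^ δ))
    (T : ℕ → Ω → ℝ)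
    (hT : ∀ n ω, T n ω = ∑' k : ℕ,
      (1 - ∏ i ∈ Finset.range n, (1 - p i ω ^ (k + 1)))) :
    ∀ ε > 0, ∃ y : ℝ, 0 < y ∧ ∀ᶠ n : ℕ in atTop,
      ℙ {ω | y < T n ω / n} < ENNReal.ofReal ε :=
  stmt_18_general c δ hδ p hmeas hident hrange f hf hasymp T hT
end
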